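/- arXiv:math/9401213 — 5 statements merged into one kernel-verified Lean document; each statement's English description precedes it below -/
import Mathlib

section
/- Under the Ehrenfeucht–Mostowski hypotheses, if ā = (a₁,…,aₙ) and b̄ = (b₁,…,bₙ) are n-tuples from U that are atomically equivalent in ⟨U,≤⟩ (i.e., aᵢ ≤ aⱼ if and only if bᵢ ≤ bⱼ for all i, j ≤ n), then ā and b̄ satisfy the same L-formulas in the L-structure Sg^M(K*U). -/
open FirstOrder Language Cardinal

/-- `K*V`: the set `V` together with all values of terms from `K` at tuples from `V`. -/
def KStarSet {L' : FirstOrder.Language} {M : Type*} [L'.Structure M]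
    (K : Set (Σ n, L'.Term (Fin n))) (V : Set M) : Set M :=
  V ∪ {x | ∃ t ∈ K, ∃ v : Fin t.1 → ↥V, x = t.2.realize fun i => (v i : M)}

/-!
Every element of `Sg^M(K*U)` is the value of an `L'`-term at a finite tuple from `U`, built
so that its value at *any* tuple from `U` stays in `Sg^M(K*U)`. Call two tuples of
`Sg^M(K*U)` related when they are the values of one tuple of such terms at two tuples of the
same order type. By indiscernibility, related tuples satisfy the same `L'`-formulas, in
particular the same atomic `L`-formulas. Because `⟨U, ≤⟩` is dense without endpoints, a
finite partial isomorphism of `U` extends to any further finitely many points, so the relation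
has the back-and-forth property, and hence related tuples satisfy the same `L`-formulas.
-/

section OrderType

variable {ι κ α β : Type*} [LinearOrder α] [LinearOrder β]

def SameOrderType (u : ι → α) (v : ι → β) : Prop :=
  ∀ i j, cmp (u i) (u j) = cmp (v i) (v j)

lemma sameOrderType_of_le_iff_le {u : ι → α} {v : ι → β}
    (h : ∀ i j, u i ≤ u j ↔ v i ≤ v j) : SameOrderType u v := by
  intro i j
  have hlt : u i < u j ↔ v i < v j := by simp only [lt_iff_not_ge, h]
  have hgt : u j < u i ↔ v j < v i := by simp only [lt_iff_not_ge, h]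
  simp only [cmp, cmpUsing, hlt, hgt]

namespace SameOrderType

variable {u : ι → α} {v : ι → β}

lemma symm (h : SameOrderType u v) : SameOrderType v u := fun i j => (h i j).symm

lemma comp (h : SameOrderType u v) (e : κ → ι) : SameOrderType (u ∘ e) (v ∘ e) :=
  fun i j => h (e i) (e j)

lemma exists_strictMono_comp [Finite ι] (h : SameOrderType u v) :
    ∃ (m : ℕ) (σ : ι → Fin m) (a : Fin m → α) (b : Fin m → β),
      StrictMono a ∧ StrictMono b ∧ u = a ∘ σ ∧ v = b ∘ σ := by
  classical
  have := Fintype.ofFinite ι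
  set s := Finset.univ.image u
  let a := s.orderEmbOfFin rfl
  have hσ : ∀ i, ∃ j, a j = u i := fun i => by
    rw [← Set.mem_range, Finset.range_orderEmbOfFin]; simp [s]
  have hτ : ∀ j, ∃ i, u i = a j := fun j => by
    obtain ⟨i, -, hi⟩ := Finset.mem_image.mp (s.orderEmbOfFin_mem rfl j)
    exact ⟨i, hi⟩
  choose σ hσ using hσ
  choose τ hτ using hτ
  refine ⟨s.card, σ, a, v ∘ τ, a.strictMono, fun j j' hjj' => ?_, ?_, ?_⟩
  · have : u (τ j) < u (τ j') := by rw [hτ, hτ]; exact a.strictMono hjj'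
    exact (lt_iff_lt_of_cmp_eq_cmp (h _ _)).mp this
  · exact funext fun i => (hσ i).symm
  · exact funext fun i => ((eq_iff_eq_of_cmp_eq_cmp (h _ _)).mp ((hτ _).trans (hσ i))).symm

end SameOrderType

lemma SameOrderType.exists_sumElim [DenselyOrdered α] [NoMinOrder α] [NoMaxOrder α]
    {γ δ : Type*} [Finite γ] [Finite δ] {u v : γ → α} (h : SameOrderType u v) (p : δ → α) :
    ∃ q : δ → α, SameOrderType (Sum.elim u p) (Sum.elim v q) := by
  classical
  have := Fintype.ofFinite γ
  have := Fintype.ofFinite δ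
  let f : Order.PartialIso α α := ⟨Finset.univ.image fun i => (u i, v i), by
    simp only [Finset.mem_image, Finset.mem_univ, true_and]
    rintro _ ⟨i, rfl⟩ _ ⟨j, rfl⟩
    exact h i j⟩
  have hext : ∀ s : Finset α, ∃ g : Order.PartialIso α α,
      f.val ⊆ g.val ∧ ∀ a ∈ s, ∃ b, (a, b) ∈ g.val := by
    intro s
    induction s using Finset.induction_on with
    | empty => exact ⟨f, subset_rfl, by simp⟩
    | insert a s _ ih =>
      obtain ⟨g, hfg, hg⟩ := ih
      have : Nonempty α := ⟨a⟩
      obtain ⟨g', ⟨b, hb⟩, hgg' : g.val ⊆ g'.val⟩ :=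
        (Order.PartialIso.definedAtLeft α a).isCofinal g
      refine ⟨g', hfg.trans hgg', (Finset.forall_mem_insert _ _ _).2 ⟨⟨b, hb⟩, fun a' ha' => ?_⟩⟩
      obtain ⟨b', hb'⟩ := hg a' ha'
      exact ⟨b', hgg' hb'⟩
  obtain ⟨g, hfg, hg⟩ := hext (Finset.univ.image p)
  choose q hq using fun d => hg (p d) (Finset.mem_image_of_mem p (Finset.mem_univ d))
  have hmem : ∀ i, (Sum.elim u p i, Sum.elim v q i) ∈ g.val := by
    rintro (i | d)
    · exact hfg (Finset.mem_image_of_mem _ (Finset.mem_univ i))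
    · exact hq d
  exact ⟨q, fun i j => g.prop _ (hmem i) _ (hmem j)⟩

end OrderType

theorem FirstOrder.Language.BoundedFormula.realize_iff_of_backAndForth {L : Language}
    {N α : Type*} [L.Structure N]
    (R : ∀ {k : ℕ}, (α → N) → (Fin k → N) → (α → N) → (Fin k → N) → Prop)
    (symm : ∀ {k v xs w ys}, @R k v xs w ys → R w ys v xs)
    (atomic : ∀ {k} (φ : L.BoundedFormula α k), φ.IsAtomic →
      ∀ {v xs w ys}, R v xs w ys → (φ.Realize v xs ↔ φ.Realize w ys))
    (forth : ∀ {k v xs w ys}, @R k v xs w ys → ∀ z, ∃ z', R v (Fin.snoc xs z) w (Fin.snoc ys z'))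
    {k : ℕ} (φ : L.BoundedFormula α k) {v xs w ys} (h : R v xs w ys) :
    φ.Realize v xs ↔ φ.Realize w ys := by
  induction φ with
  | falsum => rfl
  | equal t₁ t₂ => exact atomic _ (.equal t₁ t₂) h
  | rel R ts => exact atomic _ (.rel R ts) h
  | imp φ ψ ihφ ihψ => simp only [realize_imp, ihφ h, ihψ h]
  | all φ ih =>
    simp only [realize_all]
    refine ⟨fun hv z' => ?_, fun hw z => ?_⟩
    · obtain ⟨z, hz⟩ := forth (symm h) z'
      exact (ih (symm hz)).1 (hv z)
    · obtain ⟨z', hz⟩ := forth h z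
      exact (ih hz).2 (hw z')

lemma Sum.elim_snoc_eq_comp {α N : Type*} {k : ℕ} (a : α → N) (b : Fin k → N) (c : N) :
    Sum.elim a (Fin.snoc b c) = Sum.elim (Sum.elim a b) (fun _ : Unit => c) ∘
      Sum.elim (Sum.inl ∘ Sum.inl) (Fin.snoc (Sum.inl ∘ Sum.inr) (Sum.inr ())) := by
  funext i
  rcases i with i | i
  · rfl
  · change _ = (Sum.elim (Sum.elim a b) (fun _ => c) ∘
      Fin.snoc (Sum.inl ∘ Sum.inr) (Sum.inr ())) i
    rw [Fin.comp_snoc]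
    rfl

lemma FirstOrder.Language.BoundedFormula.IsQF.realize_substructure_iff {L L' : Language}
    {M : Type*} [L.Structure M] [L'.Structure M] (φL : L →ᴸ L') [φL.IsExpansionOn M]
    {S : L.Substructure M} {α : Type*} {k : ℕ} {φ : L.BoundedFormula α k} (hφ : φ.IsQF)
    (v : α → S) (xs : Fin k → S) :
    φ.Realize v xs ↔
      (φL.onBoundedFormula φ).toFormula.Realize (Sum.elim (((↑) : S → M) ∘ v) ((↑) ∘ xs)) := by
  rw [BoundedFormula.realize_toFormula, LHom.realize_onBoundedFormula,
    ← hφ.realize_embedding S.subtype]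
  rfl

def IsOrderIndiscernible (L : Language) {I M : Type*} [LinearOrder I] [L.Structure M]
    (f : I → M) : Prop :=
  ∀ (n : ℕ) (ψ : L.Formula (Fin n)) (a b : Fin n → I), StrictMono a → StrictMono b →
    (ψ.Realize (f ∘ a) ↔ ψ.Realize (f ∘ b))

section Indiscernibles

variable {L : Language} {I M : Type*} [LinearOrder I] [L.Structure M] {f : I → M}

lemma IsOrderIndiscernible.realize_iff (hf : IsOrderIndiscernible L f) {γ : Type*} [Finite γ]
    (θ : L.Formula γ) {u v : γ → I} (h : SameOrderType u v) :
    θ.Realize (f ∘ u) ↔ θ.Realize (f ∘ v) := by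
  obtain ⟨m, σ, a, b, ha, hb, rfl, rfl⟩ := h.exists_strictMono_comp
  exact (Formula.realize_relabel.symm.trans (hf m (θ.relabel σ) a b ha hb)).trans
    Formula.realize_relabel

variable (L f) in
def TermImagesOfSameOrderType {β : Type*} (x y : β → M) : Prop :=
  ∃ (γ : Type) (_ : Finite γ) (c : β → L.Term γ) (u v : γ → I), SameOrderType u v ∧
    x = (fun i => (c i).realize (f ∘ u)) ∧ y = fun i => (c i).realize (f ∘ v)

namespace TermImagesOfSameOrderType

variable {β κ : Type*} {x y : β → M}

lemma of_sameOrderType {γ : Type} [Finite γ] {u v : γ → I} (h : SameOrderType u v) :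
    TermImagesOfSameOrderType L f (f ∘ u) (f ∘ v) :=
  ⟨γ, inferInstance, Term.var, u, v, h, rfl, rfl⟩

lemma symm (h : TermImagesOfSameOrderType L f x y) : TermImagesOfSameOrderType L f y x := by
  obtain ⟨γ, _, c, u, v, huv, rfl, rfl⟩ := h
  exact ⟨γ, inferInstance, c, v, u, huv.symm, rfl, rfl⟩

lemma comp (h : TermImagesOfSameOrderType L f x y) (e : κ → β) :
    TermImagesOfSameOrderType L f (x ∘ e) (y ∘ e) := by
  obtain ⟨γ, _, c, u, v, huv, rfl, rfl⟩ := h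
  exact ⟨γ, inferInstance, c ∘ e, u, v, huv, rfl, rfl⟩

lemma realize_iff (hf : IsOrderIndiscernible L f) (h : TermImagesOfSameOrderType L f x y)
    (θ : L.Formula β) : θ.Realize x ↔ θ.Realize y := by
  obtain ⟨γ, _, c, u, v, huv, rfl, rfl⟩ := h
  simpa only [Formula.Realize, BoundedFormula.realize_subst] using
    hf.realize_iff (θ.subst c) huv

lemma exists_sumElim [DenselyOrdered I] [NoMinOrder I] [NoMaxOrder I]
    (h : TermImagesOfSameOrderType L f x y) {δ : Type} [Finite δ] (g : L.Term δ) (p : δ → I) :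
    ∃ q : δ → I, TermImagesOfSameOrderType L f
      (Sum.elim x fun _ : Unit => g.realize (f ∘ p)) (Sum.elim y fun _ => g.realize (f ∘ q)) := by
  obtain ⟨γ, _, c, u, v, huv, rfl, rfl⟩ := h
  obtain ⟨q, hq⟩ := huv.exists_sumElim p
  refine ⟨q, γ ⊕ δ, inferInstance,
    Sum.elim (fun i => (c i).relabel Sum.inl) fun _ => g.relabel Sum.inr, _, _, hq, ?_, ?_⟩ <;>
  · funext i
    rcases i with i | i <;> simp [Term.realize_relabel, Function.comp_assoc]

end TermImagesOfSameOrderType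

end Indiscernibles

section ClosureKStar

variable {L L' : Language} {M : Type*} [L.Structure M] [L'.Structure M]
  {K : Set (Σ n, L'.Term (Fin n))} {U : Set M}

lemma exists_term_of_mem_closure_kStarSet (φL : L →ᴸ L') [φL.IsExpansionOn M] {z : M}
    (hz : z ∈ Substructure.closure L (KStarSet K U)) :
    ∃ (δ : Type) (_ : Finite δ) (g : L'.Term δ) (p : δ → U), g.realize ((↑) ∘ p) = z ∧
      ∀ q : δ → U, g.realize ((↑) ∘ q) ∈ Substructure.closure L (KStarSet K U) := by
  refine Substructure.closure_induction (p := fun z => ∃ (δ : Type) (_ : Finite δ)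
    (g : L'.Term δ) (p : δ → U), g.realize ((↑) ∘ p) = z ∧
      ∀ q : δ → U, g.realize ((↑) ∘ q) ∈ Substructure.closure L (KStarSet K U))
    hz (fun z hz => ?_) fun F xs hxs => ?_
  · rcases hz with hz | ⟨t, ht, p, rfl⟩
    · refine ⟨Unit, inferInstance, Term.var (), fun _ => ⟨z, hz⟩, rfl, fun q => ?_⟩
      exact Substructure.subset_closure (Or.inl (q ()).2)
    · exact ⟨Fin t.1, inferInstance, t.2, p, rfl, fun q =>
        Substructure.subset_closure (Or.inr ⟨t, ht, q, rfl⟩)⟩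
  · choose δ _ g p hgp hg using hxs
    refine ⟨Σ i, δ i, inferInstance, Term.func (φL.onFunction F) fun i => (g i).relabel
      (Sigma.mk i), fun s => p s.1 s.2, ?_, fun q => ?_⟩
    · simp only [Term.realize_func, LHom.map_onFunction, Term.realize_relabel]
      congr 1
      funext i
      rw [← hgp i]
      rfl
    · simp only [Term.realize_func, LHom.map_onFunction, Term.realize_relabel]
      exact Substructure.fun_mem _ F _ fun i => hg i _

end ClosureKStar

section Main

variable {L L' : Language} {M : Type*} [L.Structure M] [L'.Structure M]
  {K : Set (Σ n, L'.Term (Fin n))} {U : Set M}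
  [LinearOrder U] [DenselyOrdered U] [NoMinOrder U] [NoMaxOrder U]

theorem realize_closure_kStarSet_iff (φL : L →ᴸ L') [φL.IsExpansionOn M]
    (hInd : IsOrderIndiscernible L' ((↑) : U → M)) {α : Type*} {k : ℕ}
    (φ : L.BoundedFormula α k) {v w : α → Substructure.closure L (KStarSet K U)}
    {xs ys : Fin k → Substructure.closure L (KStarSet K U)}
    (h : TermImagesOfSameOrderType L' ((↑) : U → M)
      (Sum.elim ((↑) ∘ v) ((↑) ∘ xs)) (Sum.elim ((↑) ∘ w) ((↑) ∘ ys))) :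
    φ.Realize v xs ↔ φ.Realize w ys := by
  refine BoundedFormula.realize_iff_of_backAndForth (fun v xs w ys =>
    TermImagesOfSameOrderType L' ((↑) : U → M)
      (Sum.elim ((↑) ∘ v) ((↑) ∘ xs)) (Sum.elim ((↑) ∘ w) ((↑) ∘ ys)))
    (fun h => h.symm) (fun φ hφ v xs w ys h => ?_) (fun h z => ?_) φ h
  · rw [hφ.isQF.realize_substructure_iff φL, hφ.isQF.realize_substructure_iff φL]
    exact h.realize_iff hInd _
  · obtain ⟨δ, _, g, p, hz, hg⟩ := exists_term_of_mem_closure_kStarSet φL z.2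
    obtain ⟨q, hq⟩ := h.exists_sumElim g p
    refine ⟨⟨_, hg q⟩, ?_⟩
    have hsnoc :=
      hq.comp (Sum.elim (Sum.inl ∘ Sum.inl) (Fin.snoc (Sum.inl ∘ Sum.inr) (Sum.inr ())))
    rw [← Sum.elim_snoc_eq_comp, ← Sum.elim_snoc_eq_comp, hz] at hsnoc
    rwa [Fin.comp_snoc, Fin.comp_snoc]

end Main

theorem stmt5_general {L L' : FirstOrder.Language} (φL : L →ᴸ L') (M : Type*)
    [L.Structure M] [L'.Structure M] [φL.IsExpansionOn M]
    (U : Set M) [LinearOrder ↥U] [DenselyOrdered ↥U] [NoMinOrder ↥U] [NoMaxOrder ↥U]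
    (hInd : ∀ (n : ℕ) (ψ : L'.Formula (Fin n)) (a b : Fin n → ↥U),
      StrictMono a → StrictMono b →
      (ψ.Realize (fun i => (a i : M)) ↔ ψ.Realize fun i => (b i : M)))
    (K : Set (Σ n, L'.Term (Fin n)))
    (n : ℕ) (a b : Fin n → ↥U)
    (hab : ∀ i j : Fin n, a i ≤ a j ↔ b i ≤ b j)
    (ψ : L.Formula (Fin n)) :
    Formula.Realize (M := ↥(Substructure.closure L (KStarSet K U))) ψ
        (fun i => ⟨(a i : M), Substructure.subset_closure (Set.mem_union_left _ (a i).2)⟩) ↔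
      Formula.Realize (M := ↥(Substructure.closure L (KStarSet K U))) ψ
        (fun i => ⟨(b i : M), Substructure.subset_closure (Set.mem_union_left _ (b i).2)⟩) := by
  refine realize_closure_kStarSet_iff φL hInd ψ ?_
  convert (TermImagesOfSameOrderType.of_sameOrderType (L := L') (f := ((↑) : U → M))
    (sameOrderType_of_le_iff_le hab)).comp (Sum.elim id finZeroElim) using 1 <;>
  · funext i
    rcases i with i | i
    · rfl
    · exact i.elim0

/-- Ehrenfeucht–Mostowski hypotheses: if `ā`, `b̄` are `n`-tuples from `U` that are atomically
equivalent in `⟨U, ≤⟩`, then they satisfy the same `L`-formulas in `Sg^M(K*U)`. -/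
theorem stmt5 {L L' : FirstOrder.Language} (φL : L →ᴸ L') (M : Type*)
    [L.Structure M] [L'.Structure M] [φL.IsExpansionOn M]
    (U : Set M) [LinearOrder ↥U] [DenselyOrdered ↥U] [NoMinOrder ↥U] [NoMaxOrder ↥U]
    (hUne : U.Nonempty)
    (hUgen : Substructure.closure L' U = ⊤)
    (hInd : ∀ (n : ℕ) (ψ : L'.Formula (Fin n)) (a b : Fin n → ↥U),
      StrictMono a → StrictMono b →
      (ψ.Realize (fun i => (a i : M)) ↔ ψ.Realize fun i => (b i : M)))
    (K : Set (Σ n, L'.Term (Fin n)))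
    (n : ℕ) (a b : Fin n → ↥U)
    (hab : ∀ i j : Fin n, a i ≤ a j ↔ b i ≤ b j)
    (ψ : L.Formula (Fin n)) :
    Formula.Realize (M := ↥(Substructure.closure L (KStarSet K U))) ψ
        (fun i => ⟨(a i : M), Substructure.subset_closure (Set.mem_union_left _ (a i).2)⟩) ↔
      Formula.Realize (M := ↥(Substructure.closure L (KStarSet K U))) ψ
        (fun i => ⟨(b i : M), Substructure.subset_closure (Set.mem_union_left _ (b i).2)⟩) :=
  stmt5_general φL M U hInd K n a b hab ψ
end

section
/- Under the Ehrenfeucht–Mostowski hypotheses, let V ⊆ U be such that ⟨V,≤⟩ (with the order inherited from U) is a nonempty dense linear order without endpoints, and let θ : V → U be order-preserving (v < w implies θ(v) < θ(w)). Then there is an L-elementary embedding Θ of the L-structure Sg^M(K*V) into the L-structure Sg^M(K*U) such that Θ(v) = θ(v) for every v ∈ V and Θ(t^{M'}(v̄)) = t^{M'}(θ(v̄)) for every t ∈ K and every tuple v̄ from V. -/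
open FirstOrder Language Cardinal

section OrderLemmas

variable {X Y : Type*} [LinearOrder X] [LinearOrder Y]

/-- insert a single point matching a pattern -/
theorem EM.insert_point [DenselyOrdered Y] [NoMinOrder Y] [NoMaxOrder Y] [Nonempty Y]
    (j : Y → X) (hj : StrictMono j) {ι : Type*} [Finite ι]
    (a : ι → Y) (b : ι → X) (hab : ∀ i i', b i ≤ b i' ↔ j (a i) ≤ j (a i')) (x : X) :
    ∃ y : Y, ∀ i, (b i ≤ x ↔ j (a i) ≤ j y) ∧ (x ≤ b i ↔ j y ≤ j (a i)) := by
  classical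
  have := Fintype.ofFinite ι
  have hable : ∀ i i', a i ≤ a i' ↔ b i ≤ b i' := by
    intro i i'; rw [hab, hj.le_iff_le]
  by_cases hx : ∃ i, b i = x
  · obtain ⟨i₀, hi₀⟩ := hx
    refine ⟨a i₀, fun i => ⟨?_, ?_⟩⟩
    · rw [← hi₀, hab]
    · rw [← hi₀, hab]
  · push_neg at hx
    set Lo : Finset ι := Finset.univ.filter (fun i => b i < x) with hLo
    set Hi : Finset ι := Finset.univ.filter (fun i => x < b i) with hHi
    have hmem : ∀ i, i ∈ Lo ∨ i ∈ Hi := by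
      intro i
      rcases lt_trichotomy (b i) x with h | h | h
      · exact Or.inl (by simp [hLo, h])
      · exact absurd h (hx i)
      · exact Or.inr (by simp [hHi, h])
    have hLomem : ∀ i, i ∈ Lo ↔ b i < x := by intro i; simp [hLo]
    have hHimem : ∀ i, i ∈ Hi ↔ x < b i := by intro i; simp [hHi]
    rcases Lo.eq_empty_or_nonempty with hLe | hLne
    · rcases Hi.eq_empty_or_nonempty with hHe | hHne
      · refine ⟨Classical.arbitrary Y, fun i => ?_⟩
        rcases hmem i with h | h
        · rw [hLe] at h; simp at h
        · rw [hHe] at h; simp at h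
      · -- all points above x
        obtain ⟨i₁, hi₁mem, hi₁⟩ := Finset.exists_min_image Hi b hHne
        obtain ⟨y, hy⟩ := exists_lt (a i₁)
        refine ⟨y, fun i => ?_⟩
        have hiHi : i ∈ Hi := (hmem i).resolve_left (by rw [hLe]; simp)
        have hxbi : x < b i := (hHimem i).1 hiHi
        have h1i : b i₁ ≤ b i := hi₁ i hiHi
        constructor
        · constructor
          · intro h; exact absurd (h.trans_lt hxbi) (lt_irrefl _)
          · intro h
            exfalso
            have : a i ≤ y := hj.le_iff_le.1 h
            have : a i₁ ≤ y := ((hable i₁ i).2 h1i).trans this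
            exact absurd (this.trans_lt' hy) (lt_irrefl _)
        · constructor
          · intro _
            exact hj.monotone ((hy.le.trans ((hable i₁ i).2 h1i)))
          · intro _; exact hxbi.le
    · rcases Hi.eq_empty_or_nonempty with hHe | hHne
      · -- all points below x
        obtain ⟨i₀, hi₀mem, hi₀⟩ := Finset.exists_max_image Lo b hLne
        obtain ⟨y, hy⟩ := exists_gt (a i₀)
        refine ⟨y, fun i => ?_⟩
        have hiLo : i ∈ Lo := (hmem i).resolve_right (by rw [hHe]; simp)
        have hbix : b i < x := (hLomem i).1 hiLo
        have h0i : b i ≤ b i₀ := hi₀ i hiLo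
        constructor
        · constructor
          · intro _
            exact hj.monotone (((hable i i₀).2 h0i).trans hy.le)
          · intro _; exact hbix.le
        · constructor
          · intro h; exact absurd (hbix.trans_le h) (lt_irrefl _)
          · intro h
            exfalso
            have hya : y ≤ a i := hj.le_iff_le.1 h
            have : y ≤ a i₀ := hya.trans ((hable i i₀).2 h0i)
            exact absurd (hy.trans_le this) (lt_irrefl _)
      · -- points on both sides
        obtain ⟨i₀, hi₀mem, hi₀⟩ := Finset.exists_max_image Lo b hLne
        obtain ⟨i₁, hi₁mem, hi₁⟩ := Finset.exists_min_image Hi b hHne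
        have hb01 : b i₀ < b i₁ := ((hLomem i₀).1 hi₀mem).trans ((hHimem i₁).1 hi₁mem)
        have ha01 : a i₀ < a i₁ := by
          rw [lt_iff_not_ge] at hb01 ⊢
          exact fun h => hb01 ((hable i₁ i₀).1 h)
        obtain ⟨y, hy₀, hy₁⟩ := exists_between ha01
        refine ⟨y, fun i => ?_⟩
        rcases hmem i with hiLo | hiHi
        · have hbix : b i < x := (hLomem i).1 hiLo
          have h0i : b i ≤ b i₀ := hi₀ i hiLo
          constructor
          · constructor
            · intro _
              exact hj.monotone (((hable i i₀).2 h0i).trans hy₀.le)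
            · intro _; exact hbix.le
          · constructor
            · intro h; exact absurd (hbix.trans_le h) (lt_irrefl _)
            · intro h
              exfalso
              have : y ≤ a i := hj.le_iff_le.1 h
              have : y ≤ a i₀ := this.trans ((hable i i₀).2 h0i)
              exact absurd (hy₀.trans_le this) (lt_irrefl _)
        · have hxbi : x < b i := (hHimem i).1 hiHi
          have h1i : b i₁ ≤ b i := hi₁ i hiHi
          constructor
          · constructor
            · intro h; exact absurd (h.trans_lt hxbi) (lt_irrefl _)
            · intro h
              exfalso
              have : a i ≤ y := hj.le_iff_le.1 h
              have : a i₁ ≤ y := ((hable i₁ i).2 h1i).trans this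
              exact absurd (this.trans_lt' hy₁) (lt_irrefl _)
          · constructor
            · intro _
              exact hj.monotone (hy₁.le.trans ((hable i₁ i).2 h1i))
            · intro _; exact hxbi.le

/-- insert a tuple matching a pattern -/
theorem EM.insert_tuple [DenselyOrdered Y] [NoMinOrder Y] [NoMaxOrder Y] [Nonempty Y]
    (j : Y → X) (hj : StrictMono j) {ι : Type*} [Finite ι]
    (a : ι → Y) (b : ι → X) (hab : ∀ i i', b i ≤ b i' ↔ j (a i) ≤ j (a i')) :
    ∀ (m : ℕ) (w : Fin m → X), ∃ w' : Fin m → Y,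
      (∀ i k, (b i ≤ w k ↔ j (a i) ≤ j (w' k)) ∧ (w k ≤ b i ↔ j (w' k) ≤ j (a i))) ∧
      (∀ k l, w k ≤ w l ↔ j (w' k) ≤ j (w' l)) := by
  intro m
  induction m with
  | zero => exact fun w => ⟨finZeroElim, fun i k => k.elim0, fun k => k.elim0⟩
  | succ m ih =>
    intro w
    obtain ⟨w₀', hmix, hww⟩ := ih (w ∘ Fin.castSucc)
    obtain ⟨y, hy⟩ := EM.insert_point j hj (Sum.elim a w₀') (Sum.elim b (w ∘ Fin.castSucc))
      (by rintro (i | k) (i' | k')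
          · exact hab i i'
          · exact (hmix i k').1
          · exact (hmix i' k).2
          · exact hww k k')
      (w (Fin.last m))
    refine ⟨Fin.snoc w₀' y, fun i k => ?_, fun k l => ?_⟩
    · refine Fin.lastCases ?_ (fun k₀ => ?_) k
      · simpa using hy (Sum.inl i)
      · simpa using hmix i k₀
    · refine Fin.lastCases ?_ (fun k₀ => ?_) k
      · refine Fin.lastCases ?_ (fun l₀ => ?_) l
        · simp
        · simpa using (hy (Sum.inr l₀)).2
      · refine Fin.lastCases ?_ (fun l₀ => ?_) l
        · simpa using (hy (Sum.inr k₀)).1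
        · simpa using hww k₀ l₀

end OrderLemmas


section Pattern

variable {Y : Type*} [LinearOrder Y]

theorem EM.common_pattern {n : ℕ} (f f' : Fin n → Y) (h : ∀ i j, f i ≤ f j ↔ f' i ≤ f' j) :
    ∃ (m : ℕ) (c d : Fin m → Y) (σ : Fin n → Fin m),
      StrictMono c ∧ StrictMono d ∧ f = c ∘ σ ∧ f' = d ∘ σ := by
  classical
  let s : Finset Y := Finset.image f Finset.univ
  let e := s.orderIsoOfFin rfl
  have hmem : ∀ i, f i ∈ s := fun i => Finset.mem_image_of_mem f (Finset.mem_univ i)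
  let σ : Fin n → Fin s.card := fun i => e.symm ⟨f i, hmem i⟩
  have hfσ : ∀ i, (e (σ i) : Y) = f i := by
    intro i
    show ((e (e.symm ⟨f i, hmem i⟩)) : Y) = f i
    rw [e.apply_symm_apply]
  have hσsurj : Function.Surjective σ := by
    intro j
    obtain ⟨i, -, hi⟩ := Finset.mem_image.1 (e j).2
    refine ⟨i, ?_⟩
    show e.symm ⟨f i, hmem i⟩ = j
    rw [show (⟨f i, hmem i⟩ : ↥s) = e j from Subtype.ext hi, e.symm_apply_apply]
  let g := Function.surjInv hσsurj
  have hσg : ∀ j, σ (g j) = j := fun j => Function.surjInv_eq hσsurj j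
  have hlt : ∀ i i', f i < f i' ↔ f' i < f' i' := by
    intro i i'
    simp only [lt_iff_le_not_ge, h]
  refine ⟨s.card, fun j => (e j : Y), f' ∘ g, σ, ?_, ?_, ?_, ?_⟩
  · intro j j' hj
    exact Subtype.coe_lt_coe.2 (e.strictMono hj)
  · intro j j' hj
    refine (hlt (g j) (g j')).1 ?_
    rw [← hfσ (g j), ← hfσ (g j'), hσg, hσg]
    exact Subtype.coe_lt_coe.2 (e.strictMono hj)
  · exact funext fun i => (hfσ i).symm
  · funext i
    have hf : f i = f (g (σ i)) := by rw [← hfσ (g (σ i)), hσg, hfσ]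
    exact le_antisymm ((h _ _).1 hf.le) ((h _ _).1 hf.ge)

end Pattern

section EMDefs

variable {L L' : FirstOrder.Language} {M : Type*} [L.Structure M] [L'.Structure M]

/-- Abstract generators with `n` slots for order elements. -/
def EMGS {L' : FirstOrder.Language} (K : Set (Σ n, L'.Term (Fin n))) (n : ℕ) : Type _ :=
  Fin n ⊕ (Σ t : ↥K, Fin t.1.1 → Fin n)

variable (U : Set M) (K : Set (Σ n, L'.Term (Fin n)))

/-- Realization of abstract generators at a tuple of elements of `U`. -/
def EMreal {n : ℕ} (u : Fin n → ↥U) : EMGS K n → M :=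
  Sum.elim (fun i => (u i : M)) (fun p => p.1.1.2.realize fun j => (u (p.2 j) : M))

/-- Relabelling slots. -/
def EMmap {L' : FirstOrder.Language} (K : Set (Σ n, L'.Term (Fin n))) {n m : ℕ}
    (ε : Fin n → Fin m) : EMGS K n → EMGS K m :=
  Sum.map ε fun p => ⟨p.1, ε ∘ p.2⟩

theorem EMreal_comp {n m : ℕ} (u : Fin m → ↥U) (ε : Fin n → Fin m) (g : EMGS K n) :
    EMreal U K u (EMmap K ε g) = EMreal U K (u ∘ ε) g := by
  rcases g with i | p <;> rfl

theorem EMreal_mem {n : ℕ} (u : Fin n → ↥U) (g : EMGS K n) :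
    EMreal U K u g ∈ KStarSet K U := by
  rcases g with i | p
  · exact Set.mem_union_left _ (u i).2
  · exact Set.mem_union_right _ ⟨p.1.1, p.1.2, fun j => u (p.2 j), rfl⟩

theorem realize_mem_substructure {β : Type*} (S : L.Substructure M) (f : β → M)
    (hf : ∀ b, f b ∈ S) (t : L.Term β) : t.realize f ∈ S := by
  induction t with
  | var b => exact hf b
  | func fn ts ih => exact S.fun_mem fn _ fun i => ih i

theorem EMcomb {Y : Type*} [LinearOrder Y] {l : ℕ} (m : Fin l → ℕ)
    (w : ∀ i, Fin (m i) → Y) :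
    ∃ (N : ℕ) (W : Fin N → Y) (ε : ∀ i, Fin (m i) → Fin N), ∀ i j, W (ε i j) = w i j := by
  classical
  let s : Finset Y := Finset.univ.biUnion fun i : Fin l => Finset.image (w i) Finset.univ
  have hmem : ∀ i j, w i j ∈ s :=
    fun i j => Finset.mem_biUnion.2 ⟨i, Finset.mem_univ i,
      Finset.mem_image_of_mem _ (Finset.mem_univ j)⟩
  refine ⟨s.card, fun k => (s.orderIsoOfFin rfl k : Y),
    fun i j => (s.orderIsoOfFin rfl).symm ⟨w i j, hmem i j⟩, fun i j => ?_⟩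
  show (((s.orderIsoOfFin rfl) ((s.orderIsoOfFin rfl).symm ⟨w i j, hmem i j⟩)) : Y) = w i j
  rw [OrderIso.apply_symm_apply]

end EMDefs

section Transfer

variable {L L' : FirstOrder.Language} {M : Type*}
  [L.Structure M] [L'.Structure M]
  (U : Set M) [LinearOrder ↥U] (K : Set (Σ n, L'.Term (Fin n)))
  (φL : L →ᴸ L')

theorem EMindA
    (hInd : ∀ (n : ℕ) (ψ : L'.Formula (Fin n)) (a b : Fin n → ↥U),
      StrictMono a → StrictMono b →
      (ψ.Realize (fun i => (a i : M)) ↔ ψ.Realize fun i => (b i : M)))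
    {n : ℕ} (ψ : L'.Formula (Fin n)) (f f' : Fin n → ↥U)
    (h : ∀ i j, f i ≤ f j ↔ f' i ≤ f' j) :
    ψ.Realize (fun i => ((f i : ↥U) : M)) ↔ ψ.Realize (fun i => ((f' i : ↥U) : M)) := by
  obtain ⟨m, c, d, σ, hc, hd, hfc, hfd⟩ := EM.common_pattern f f' h
  have key := hInd m (ψ.relabel σ) c d hc hd
  rw [Formula.realize_relabel, Formula.realize_relabel] at key
  rw [hfc, hfd]
  exact key

theorem EMtransfer [φL.IsExpansionOn M]
    (hInd : ∀ (n : ℕ) (ψ : L'.Formula (Fin n)) (a b : Fin n → ↥U),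
      StrictMono a → StrictMono b →
      (ψ.Realize (fun i => (a i : M)) ↔ ψ.Realize fun i => (b i : M)))
    {n : ℕ} {u u' : Fin n → ↥U}
    (h : ∀ i j, u i ≤ u j ↔ u' i ≤ u' j) {α : Type*} (ψ : L.Formula α)
    (r : α → L.Term (EMGS K n)) :
    ψ.Realize (fun a => (r a).realize (EMreal U K u)) ↔
      ψ.Realize (fun a => (r a).realize (EMreal U K u')) := by
  let τ : EMGS K n → L'.Term (Fin n) :=
    Sum.elim (fun i => Term.var i) (fun p => p.1.1.2.relabel p.2)
  have hτ : ∀ (u : Fin n → ↥U) (g : EMGS K n),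
      (τ g).realize (fun i => ((u i : ↥U) : M)) = EMreal U K u g := by
    rintro u (i | p)
    · rfl
    · show (Term.relabel p.2 p.1.1.2).realize _ = _
      rw [Term.realize_relabel]
      rfl
  have key : ∀ (u : Fin n → ↥U),
      (Formula.Realize ((φL.onFormula ψ).subst fun a => (φL.onTerm (r a)).subst τ)
        (fun i => ((u i : ↥U) : M)) ↔ ψ.Realize (fun a => (r a).realize (EMreal U K u))) := by
    intro u
    have hre : (fun a => ((φL.onTerm (r a)).subst τ).realize (fun i => ((u i : ↥U) : M)))
        = fun a => (r a).realize (EMreal U K u) := by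
      funext a
      rw [Term.realize_subst, show (fun g => (τ g).realize (fun i => ((u i : ↥U) : M)))
        = EMreal U K u from funext (hτ u), LHom.realize_onTerm]
    refine Iff.trans BoundedFormula.realize_subst ?_
    rw [hre]
    exact LHom.realize_onFormula φL ψ
  exact (key u).symm.trans ((EMindA U hInd _ u u' h).trans (key u'))

end Transfer

section Reps

variable {L L' : FirstOrder.Language} {M : Type*}
  [L.Structure M] [L'.Structure M]
  (U : Set M) [LinearOrder ↥U] (K : Set (Σ n, L'.Term (Fin n)))

theorem EMrepU (z : ↥(Substructure.closure L (KStarSet K U))) :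
    ∃ (m : ℕ) (w : Fin m → ↥U) (r : L.Term (EMGS K m)),
      (z : M) = r.realize (EMreal U K w) := by
  obtain ⟨x, hx⟩ := z
  show ∃ (m : ℕ) (w : Fin m → ↥U) (r : L.Term (EMGS K m)), x = r.realize (EMreal U K w)
  have Hs : ∀ y ∈ KStarSet K U,
      ∃ (m : ℕ) (w : Fin m → ↥U) (r : L.Term (EMGS K m)), y = r.realize (EMreal U K w) := by
    rintro y (hxU | ⟨t, ht, v, rfl⟩)
    · exact ⟨1, fun _ => ⟨y, hxU⟩, Term.var (Sum.inl 0), rfl⟩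
    · exact ⟨t.1, v, Term.var (Sum.inr ⟨⟨t, ht⟩, fun j => j⟩), rfl⟩
  refine Substructure.closure_induction hx Hs ?_
  · intro l fn x hx
    choose m w r hr using hx
    obtain ⟨N, W, ε, hWε⟩ := EMcomb m w
    refine ⟨N, W, Term.func fn (fun i => (r i).relabel (EMmap K (ε i))), ?_⟩
    show Structure.funMap fn x = Structure.funMap fn _
    congr 1
    funext i
    rw [Term.realize_relabel, hr i]
    congr 1
    funext g
    rw [show (EMreal U K W ∘ EMmap K (ε i)) g = EMreal U K (W ∘ ε i) g from EMreal_comp U K W (ε i) g,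
      show W ∘ ε i = w i from funext (hWε i)]

theorem EMrealV_mem (V : Set ↥U) {n : ℕ} (v : Fin n → ↥V) (g : EMGS K n) :
    EMreal U K (fun i => ((v i : ↥U))) g ∈ KStarSet K (Subtype.val '' V) := by
  rcases g with i | p
  · exact Set.mem_union_left _ ⟨(v i : ↥U), (v i).2, rfl⟩
  · exact Set.mem_union_right _ ⟨p.1.1, p.1.2,
      fun j => ⟨(((v (p.2 j) : ↥U)) : M), ⟨(v (p.2 j) : ↥U), (v (p.2 j)).2, rfl⟩⟩, rfl⟩

theorem EMrepV (V : Set ↥U) (z : ↥(Substructure.closure L (KStarSet K (Subtype.val '' V)))) :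
    ∃ (m : ℕ) (w : Fin m → ↥V) (r : L.Term (EMGS K m)),
      (z : M) = r.realize (EMreal U K fun i => ((w i : ↥U))) := by
  obtain ⟨x, hx⟩ := z
  show ∃ (m : ℕ) (w : Fin m → ↥V) (r : L.Term (EMGS K m)),
    x = r.realize (EMreal U K fun i => ((w i : ↥U)))
  have Hs : ∀ y ∈ KStarSet K (Subtype.val '' V),
      ∃ (m : ℕ) (w : Fin m → ↥V) (r : L.Term (EMGS K m)),
        y = r.realize (EMreal U K fun i => ((w i : ↥U))) := by
    rintro y (⟨uu, huV, rfl⟩ | ⟨t, ht, v, rfl⟩)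
    · exact ⟨1, fun _ => ⟨uu, huV⟩, Term.var (Sum.inl 0), rfl⟩
    · have hch : ∀ i, ∃ y : ↥V, ((y : ↥U) : M) = (v i : M) := by
        intro i
        obtain ⟨y, hyV, hy⟩ := (v i).2
        exact ⟨⟨y, hyV⟩, hy⟩
      choose w hw using hch
      refine ⟨t.1, w, Term.var (Sum.inr ⟨⟨t, ht⟩, fun j => j⟩), ?_⟩
      show Term.realize _ t.2 = Term.realize _ t.2
      congr 1
      funext i
      exact (hw i).symm
  refine Substructure.closure_induction hx Hs ?_
  · intro l fn x hx
    choose m w r hr using hx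
    obtain ⟨N, W, ε, hWε⟩ := EMcomb m w
    refine ⟨N, W, Term.func fn (fun i => (r i).relabel (EMmap K (ε i))), ?_⟩
    show Structure.funMap fn x = Structure.funMap fn _
    congr 1
    funext i
    rw [Term.realize_relabel, hr i]
    congr 1
    funext g
    rw [show ((EMreal U K fun i => ((W i : ↥U))) ∘ EMmap K (ε i)) g
        = EMreal U K ((fun i => ((W i : ↥U))) ∘ ε i) g from EMreal_comp U K _ (ε i) g]
    congr 1
    funext j
    show ((w i j : ↥U)) = ((W (ε i j) : ↥U))
    rw [hWε i j]

/-- The element of the `U`-side hull given by a term over abstract generators. -/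
def EMtU {n : ℕ} (u : Fin n → ↥U) (r : L.Term (EMGS K n)) :
    ↥(Substructure.closure L (KStarSet K U)) :=
  ⟨r.realize (EMreal U K u),
    realize_mem_substructure _ _ (fun g => Substructure.subset_closure (EMreal_mem U K u g)) r⟩

/-- The element of the `V`-side hull given by a term over abstract generators. -/
def EMtV (V : Set ↥U) {n : ℕ} (v : Fin n → ↥V) (r : L.Term (EMGS K n)) :
    ↥(Substructure.closure L (KStarSet K (Subtype.val '' V))) :=
  ⟨r.realize (EMreal U K fun i => ((v i : ↥U))),
    realize_mem_substructure _ _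
      (fun g => Substructure.subset_closure (EMrealV_mem U K V _ g)) r⟩

theorem EMlift {β : Type*} (S : L.Substructure M) (t : L.Term β) (A : β → ↥S) :
    ((t.realize A : ↥S) : M) = t.realize (fun b => ((A b : ↥S) : M)) := by
  exact (Language.HomClass.realize_term (L := L) S.subtype (t := t) (v := A)).symm

theorem EMreal_castAdd {n m : ℕ} (u : Fin n → ↥U) (w : Fin m → ↥U) :
    EMreal U K (Fin.append u w) ∘ EMmap K (Fin.castAdd m) = EMreal U K u := by
  funext g
  rw [Function.comp_apply, EMreal_comp,
    show Fin.append u w ∘ Fin.castAdd m = u from funext (Fin.append_left u w)]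

theorem EMreal_natAdd {n m : ℕ} (u : Fin n → ↥U) (w : Fin m → ↥U) :
    EMreal U K (Fin.append u w) ∘ EMmap K (Fin.natAdd n) = EMreal U K w := by
  funext g
  rw [Function.comp_apply, EMreal_comp,
    show Fin.append u w ∘ Fin.natAdd n = w from funext (Fin.append_right u w)]

end Reps

section HullInd

variable {L L' : FirstOrder.Language} {M : Type*}
  [L.Structure M] [L'.Structure M]
  (U : Set M) [LinearOrder ↥U] (K : Set (Σ n, L'.Term (Fin n)))
  (φL : L →ᴸ L')

theorem EMtU_val_term {α : Type*} {n k' : ℕ} (u : Fin n → ↥U) (r : α → L.Term (EMGS K n))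
    (s : Fin k' → L.Term (EMGS K n)) (t : L.Term (α ⊕ Fin k')) :
    (((t.realize (Sum.elim (fun a => EMtU U K u (r a)) (fun i => EMtU U K u (s i))) :
        ↥(Substructure.closure L (KStarSet K U)))) : M)
      = t.realize (fun x => (Sum.elim r s x).realize (EMreal U K u)) := by
  rw [EMlift]
  congr 1
  funext x
  cases x <;> rfl

theorem EMhullInd [DenselyOrdered ↥U] [NoMinOrder ↥U] [NoMaxOrder ↥U] [Nonempty ↥U]
    [φL.IsExpansionOn M]
    (hInd : ∀ (n : ℕ) (ψ : L'.Formula (Fin n)) (a b : Fin n → ↥U),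
      StrictMono a → StrictMono b →
      (ψ.Realize (fun i => (a i : M)) ↔ ψ.Realize fun i => (b i : M)))
    {α : Type*} {k : ℕ} (χ : L.BoundedFormula α k) :
    ∀ {n : ℕ} (u u' : Fin n → ↥U), (∀ i j, u i ≤ u j ↔ u' i ≤ u' j) →
      ∀ (r : α → L.Term (EMGS K n)) (s : Fin k → L.Term (EMGS K n)),
      χ.Realize (fun a => EMtU U K u (r a)) (fun i => EMtU U K u (s i)) →
      χ.Realize (fun a => EMtU U K u' (r a)) (fun i => EMtU U K u' (s i)) := by
  induction χ with
  | falsum =>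
    intro n u u' h r s hreal
    exact hreal.elim
  | equal t₁ t₂ =>
    intro n u u' h r s hreal
    have hreal' : (t₁.realize (Sum.elim (fun a => EMtU U K u (r a)) fun i => EMtU U K u (s i)) :
          ↥(Substructure.closure L (KStarSet K U)))
        = t₂.realize (Sum.elim (fun a => EMtU U K u (r a)) fun i => EMtU U K u (s i)) := hreal
    have h1 : (Term.equal t₁ t₂).Realize (fun x => (Sum.elim r s x).realize (EMreal U K u)) := by
      rw [Formula.realize_equal, ← EMtU_val_term U K u r s t₁, ← EMtU_val_term U K u r s t₂]
      exact congrArg Subtype.val hreal'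
    have h2 := (EMtransfer U K φL hInd h (Term.equal t₁ t₂) (Sum.elim r s)).1 h1
    rw [Formula.realize_equal] at h2
    show (t₁.realize (Sum.elim (fun a => EMtU U K u' (r a)) fun i => EMtU U K u' (s i)) :
          ↥(Substructure.closure L (KStarSet K U)))
        = t₂.realize (Sum.elim (fun a => EMtU U K u' (r a)) fun i => EMtU U K u' (s i))
    exact Subtype.ext (by rw [EMtU_val_term, EMtU_val_term]; exact h2)
  | rel R ts =>
    intro n u u' h r s hreal
    have key := EMtransfer U K φL hInd h (Relations.formula R ts) (Sum.elim r s)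
    rw [Formula.realize_rel, Formula.realize_rel] at key
    have hreal' : Structure.RelMap R (fun i => (ts i).realize
        (Sum.elim (fun a => EMtU U K u (r a)) fun i => EMtU U K u (s i))) := hreal
    show Structure.RelMap R (fun i => (ts i).realize
        (Sum.elim (fun a => EMtU U K u' (r a)) fun i => EMtU U K u' (s i)))
    have lift : ∀ (u : Fin n → ↥U),
        (Structure.RelMap R (fun i => (ts i).realize
            (Sum.elim (fun a => EMtU U K u (r a)) (fun i => EMtU U K u (s i)))) ↔
          Structure.RelMap R (fun i => (ts i).realize
            (fun x => (Sum.elim r s x).realize (EMreal U K u)))) := by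
      intro u
      have hmr := Language.StrongHomClass.map_rel (L := L)
        (Substructure.closure L (KStarSet K U)).subtype R
        (fun i => (ts i).realize
          (Sum.elim (fun a => EMtU U K u (r a)) (fun i => EMtU U K u (s i))))
      rw [show (⇑(Substructure.closure L (KStarSet K U)).subtype ∘ fun i => (ts i).realize
          (Sum.elim (fun a => EMtU U K u (r a)) (fun i => EMtU U K u (s i))))
          = fun i => (ts i).realize (fun x => (Sum.elim r s x).realize (EMreal U K u)) from
        funext fun i => EMtU_val_term U K u r s (ts i)] at hmr
      exact hmr.symm
    exact (lift u').2 (key.1 ((lift u).1 hreal'))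
  | imp f g ihf ihg =>
    intro n u u' h r s hreal
    rw [BoundedFormula.realize_imp] at hreal ⊢
    intro hf'
    exact ihg u u' h r s (hreal (ihf u' u (fun i j => (h i j).symm) r s hf'))
  | all χ ih =>
    intro n u u' h r s hreal
    rw [BoundedFormula.realize_all] at hreal ⊢
    intro z
    obtain ⟨m, w', r₁, hz⟩ := EMrepU U K z
    obtain ⟨wn, hmix, hww⟩ := EM.insert_tuple (id : ↥U → ↥U) strictMono_id u u'
      (fun i j => (h i j).symm) m w'
    have happ : ∀ i j : Fin (n + m), Fin.append u wn i ≤ Fin.append u wn j ↔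
        Fin.append u' w' i ≤ Fin.append u' w' j := by
      have hcase : ∀ (i : Fin (n + m)),
          (∃ i₀, i = Fin.castAdd m i₀) ∨ (∃ i₀, i = Fin.natAdd n i₀) :=
        fun i => Fin.addCases (fun i₀ => Or.inl ⟨i₀, rfl⟩) (fun i₀ => Or.inr ⟨i₀, rfl⟩) i
      intro i j
      rcases hcase i with ⟨i₀, rfl⟩ | ⟨i₀, rfl⟩ <;> rcases hcase j with ⟨j₀, rfl⟩ | ⟨j₀, rfl⟩ <;>
        simp only [Fin.append_left, Fin.append_right]
      · exact h i₀ j₀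
      · exact ((hmix i₀ j₀).1).symm
      · exact ((hmix j₀ i₀).2).symm
      · exact (hww i₀ j₀).symm
    have hparam : ∀ (uu : Fin n → ↥U) (ww : Fin m → ↥U) (t : L.Term (EMGS K n)),
        EMtU U K (Fin.append uu ww) (t.relabel (EMmap K (Fin.castAdd m))) = EMtU U K uu t := by
      intro uu ww t
      refine Subtype.ext ?_
      show (t.relabel (EMmap K (Fin.castAdd m))).realize (EMreal U K (Fin.append uu ww))
        = t.realize (EMreal U K uu)
      rw [Term.realize_relabel, EMreal_castAdd]
    have hlast : ∀ (uu : Fin n → ↥U) (ww : Fin m → ↥U) (t : L.Term (EMGS K m)),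
        EMtU U K (Fin.append uu ww) (t.relabel (EMmap K (Fin.natAdd n))) = EMtU U K ww t := by
      intro uu ww t
      refine Subtype.ext ?_
      show (t.relabel (EMmap K (Fin.natAdd n))).realize (EMreal U K (Fin.append uu ww))
        = t.realize (EMreal U K ww)
      rw [Term.realize_relabel, EMreal_natAdd]
    have hin : χ.Realize
        (fun a => EMtU U K (Fin.append u wn) ((r a).relabel (EMmap K (Fin.castAdd m))))
        (fun i => EMtU U K (Fin.append u wn)
          ((Fin.snoc (fun i₀ => (s i₀).relabel (EMmap K (Fin.castAdd m)))
            (r₁.relabel (EMmap K (Fin.natAdd n))) : _ → L.Term (EMGS K (n + m))) i)) := by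
      have h0 := hreal (EMtU U K (Fin.append u wn) (r₁.relabel (EMmap K (Fin.natAdd n))))
      have e1 : (fun a => EMtU U K (Fin.append u wn) ((r a).relabel (EMmap K (Fin.castAdd m))))
          = fun a => EMtU U K u (r a) := funext fun a => hparam u wn (r a)
      have e2 : (fun i => EMtU U K (Fin.append u wn)
            ((Fin.snoc (fun i₀ => (s i₀).relabel (EMmap K (Fin.castAdd m)))
              (r₁.relabel (EMmap K (Fin.natAdd n))) : _ → L.Term (EMGS K (n + m))) i))
          = Fin.snoc (fun i => EMtU U K u (s i))
              (EMtU U K (Fin.append u wn) (r₁.relabel (EMmap K (Fin.natAdd n)))) := by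
        funext i
        refine Fin.lastCases ?_ (fun i₀ => ?_) i
        · rw [Fin.snoc_last, Fin.snoc_last]
        · rw [Fin.snoc_castSucc, Fin.snoc_castSucc, hparam]
      rw [e1, e2]
      exact h0
    have H := ih (Fin.append u wn) (Fin.append u' w') happ
      (fun a => (r a).relabel (EMmap K (Fin.castAdd m)))
      ((Fin.snoc (fun i₀ => (s i₀).relabel (EMmap K (Fin.castAdd m)))
        (r₁.relabel (EMmap K (Fin.natAdd n))) : _ → L.Term (EMGS K (n + m)))) hin
    have e1' : (fun a => EMtU U K (Fin.append u' w') ((r a).relabel (EMmap K (Fin.castAdd m))))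
        = fun a => EMtU U K u' (r a) := funext fun a => hparam u' w' (r a)
    have e2' : (fun i => EMtU U K (Fin.append u' w')
          ((Fin.snoc (fun i₀ => (s i₀).relabel (EMmap K (Fin.castAdd m)))
            (r₁.relabel (EMmap K (Fin.natAdd n))) : _ → L.Term (EMGS K (n + m))) i))
        = Fin.snoc (fun i => EMtU U K u' (s i)) z := by
      funext i
      refine Fin.lastCases ?_ (fun i₀ => ?_) i
      · rw [Fin.snoc_last, Fin.snoc_last]
        rw [hlast u' w' r₁]
        refine Subtype.ext ?_
        exact hz.symm
      · rw [Fin.snoc_castSucc, Fin.snoc_castSucc, hparam]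
    rw [e1', e2'] at H
    exact H

end HullInd

theorem EMcomp_append {β γ : Type*} (f : β → γ) {n m : ℕ} (a : Fin n → β) (b : Fin m → β) :
    f ∘ Fin.append a b = Fin.append (f ∘ a) (f ∘ b) := by
  funext i
  refine Fin.addCases (fun i₀ => ?_) (fun i₀ => ?_) i
  · simp [Fin.append_left]
  · simp [Fin.append_right]

section MainE

variable {L L' : FirstOrder.Language} {M : Type*}
  [L.Structure M] [L'.Structure M]
  (U : Set M) [LinearOrder ↥U] (K : Set (Σ n, L'.Term (Fin n)))
  (φL : L →ᴸ L') (V : Set ↥U) (θ : ↥V → ↥U)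

theorem EMtU_castAdd {n m : ℕ} (uu : Fin n → ↥U) (ww : Fin m → ↥U) (t : L.Term (EMGS K n)) :
    EMtU U K (Fin.append uu ww) (t.relabel (EMmap K (Fin.castAdd m))) = EMtU U K uu t := by
  refine Subtype.ext ?_
  show (t.relabel (EMmap K (Fin.castAdd m))).realize (EMreal U K (Fin.append uu ww))
    = t.realize (EMreal U K uu)
  rw [Term.realize_relabel, EMreal_castAdd]

theorem EMtU_natAdd {n m : ℕ} (uu : Fin n → ↥U) (ww : Fin m → ↥U) (t : L.Term (EMGS K m)) :
    EMtU U K (Fin.append uu ww) (t.relabel (EMmap K (Fin.natAdd n))) = EMtU U K ww t := by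
  refine Subtype.ext ?_
  show (t.relabel (EMmap K (Fin.natAdd n))).realize (EMreal U K (Fin.append uu ww))
    = t.realize (EMreal U K ww)
  rw [Term.realize_relabel, EMreal_natAdd]

theorem EMcoe_append {n m : ℕ} (v : Fin n → ↥V) (w : Fin m → ↥V) :
    (fun i => ((Fin.append v w i : ↥V) : ↥U))
      = Fin.append (fun i => ((v i : ↥V) : ↥U)) (fun k => ((w k : ↥V) : ↥U)) :=
  EMcomp_append (fun y : ↥V => (y : ↥U)) v w

theorem EMtV_castAdd {n m : ℕ} (v : Fin n → ↥V) (w : Fin m → ↥V) (t : L.Term (EMGS K n)) :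
    EMtV U K V (Fin.append v w) (t.relabel (EMmap K (Fin.castAdd m))) = EMtV U K V v t := by
  refine Subtype.ext ?_
  show (t.relabel (EMmap K (Fin.castAdd m))).realize
      (EMreal U K fun i => ((Fin.append v w i : ↥V) : ↥U))
    = t.realize (EMreal U K fun i => ((v i : ↥V) : ↥U))
  rw [Term.realize_relabel, EMcoe_append U V, EMreal_castAdd]

theorem EMtV_natAdd {n m : ℕ} (v : Fin n → ↥V) (w : Fin m → ↥V) (t : L.Term (EMGS K m)) :
    EMtV U K V (Fin.append v w) (t.relabel (EMmap K (Fin.natAdd n))) = EMtV U K V w t := by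
  refine Subtype.ext ?_
  show (t.relabel (EMmap K (Fin.natAdd n))).realize
      (EMreal U K fun i => ((Fin.append v w i : ↥V) : ↥U))
    = t.realize (EMreal U K fun i => ((w i : ↥V) : ↥U))
  rw [Term.realize_relabel, EMcoe_append U V, EMreal_natAdd]

theorem EMtV_val_term {α : Type*} {n k' : ℕ} (v : Fin n → ↥V) (r : α → L.Term (EMGS K n))
    (s : Fin k' → L.Term (EMGS K n)) (t : L.Term (α ⊕ Fin k')) :
    (((t.realize (Sum.elim (fun a => EMtV U K V v (r a)) (fun i => EMtV U K V v (s i))) :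
        ↥(Substructure.closure L (KStarSet K (Subtype.val '' V))))) : M)
      = t.realize (fun x => (Sum.elim r s x).realize (EMreal U K fun i => ((v i : ↥V) : ↥U))) := by
  rw [EMlift]
  congr 1
  funext x
  cases x <;> rfl

theorem EMmainE [DenselyOrdered ↥U] [NoMinOrder ↥U] [NoMaxOrder ↥U] [Nonempty ↥U]
    [DenselyOrdered ↥V] [NoMinOrder ↥V] [NoMaxOrder ↥V] [Nonempty ↥V]
    [φL.IsExpansionOn M]
    (hInd : ∀ (n : ℕ) (ψ : L'.Formula (Fin n)) (a b : Fin n → ↥U),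
      StrictMono a → StrictMono b →
      (ψ.Realize (fun i => (a i : M)) ↔ ψ.Realize fun i => (b i : M)))
    (hθ : StrictMono θ)
    {α : Type*} {k : ℕ} (χ : L.BoundedFormula α k) :
    ∀ {n : ℕ} (v : Fin n → ↥V) (r : α → L.Term (EMGS K n)) (s : Fin k → L.Term (EMGS K n)),
      (χ.Realize (fun a => EMtV U K V v (r a)) (fun i => EMtV U K V v (s i)) ↔
        χ.Realize (fun a => EMtU U K (θ ∘ v) (r a)) (fun i => EMtU U K (θ ∘ v) (s i))) := by
  have hvv : ∀ {n : ℕ} (v : Fin n → ↥V) (i j : Fin n),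
      ((v i : ↥V) : ↥U) ≤ ((v j : ↥V) : ↥U) ↔ (θ ∘ v) i ≤ (θ ∘ v) j := by
    intro n v i j
    rw [Subtype.coe_le_coe]
    exact (hθ.le_iff_le).symm
  induction χ with
  | falsum =>
    intro n v r s
    exact Iff.rfl
  | equal t₁ t₂ =>
    intro n v r s
    have key := EMtransfer U K φL hInd (hvv v) (Term.equal t₁ t₂) (Sum.elim r s)
    rw [Formula.realize_equal, Formula.realize_equal] at key
    constructor
    · intro hreal
      have hreal' : (t₁.realize (Sum.elim (fun a => EMtV U K V v (r a)) fun i => EMtV U K V v (s i)) :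
            ↥(Substructure.closure L (KStarSet K (Subtype.val '' V))))
          = t₂.realize (Sum.elim (fun a => EMtV U K V v (r a)) fun i => EMtV U K V v (s i)) := hreal
      show (t₁.realize (Sum.elim (fun a => EMtU U K (θ ∘ v) (r a)) fun i => EMtU U K (θ ∘ v) (s i)) :
            ↥(Substructure.closure L (KStarSet K U)))
          = t₂.realize (Sum.elim (fun a => EMtU U K (θ ∘ v) (r a)) fun i => EMtU U K (θ ∘ v) (s i))
      refine Subtype.ext ?_
      rw [EMtU_val_term, EMtU_val_term]
      refine key.1 ?_
      rw [← EMtV_val_term U K V v r s t₁, ← EMtV_val_term U K V v r s t₂]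
      exact congrArg Subtype.val hreal'
    · intro hreal
      have hreal' : (t₁.realize (Sum.elim (fun a => EMtU U K (θ ∘ v) (r a)) fun i => EMtU U K (θ ∘ v) (s i)) :
            ↥(Substructure.closure L (KStarSet K U)))
          = t₂.realize (Sum.elim (fun a => EMtU U K (θ ∘ v) (r a)) fun i => EMtU U K (θ ∘ v) (s i)) := hreal
      show (t₁.realize (Sum.elim (fun a => EMtV U K V v (r a)) fun i => EMtV U K V v (s i)) :
            ↥(Substructure.closure L (KStarSet K (Subtype.val '' V))))
          = t₂.realize (Sum.elim (fun a => EMtV U K V v (r a)) fun i => EMtV U K V v (s i))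
      refine Subtype.ext ?_
      rw [EMtV_val_term, EMtV_val_term]
      refine key.2 ?_
      rw [← EMtU_val_term U K (θ ∘ v) r s t₁, ← EMtU_val_term U K (θ ∘ v) r s t₂]
      exact congrArg Subtype.val hreal'
  | rel R ts =>
    intro n v r s
    have key := EMtransfer U K φL hInd (hvv v) (Relations.formula R ts) (Sum.elim r s)
    rw [Formula.realize_rel, Formula.realize_rel] at key
    have liftV : (Structure.RelMap R (fun i => (ts i).realize
          (Sum.elim (fun a => EMtV U K V v (r a)) (fun i => EMtV U K V v (s i)))) ↔
        Structure.RelMap R (fun i => (ts i).realize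
          (fun x => (Sum.elim r s x).realize (EMreal U K fun i => ((v i : ↥V) : ↥U))))) := by
      have hmr := Language.StrongHomClass.map_rel (L := L)
        (Substructure.closure L (KStarSet K (Subtype.val '' V))).subtype R
        (fun i => (ts i).realize
          (Sum.elim (fun a => EMtV U K V v (r a)) (fun i => EMtV U K V v (s i))))
      rw [show (⇑(Substructure.closure L (KStarSet K (Subtype.val '' V))).subtype ∘
          fun i => (ts i).realize
            (Sum.elim (fun a => EMtV U K V v (r a)) (fun i => EMtV U K V v (s i))))
          = fun i => (ts i).realize
              (fun x => (Sum.elim r s x).realize (EMreal U K fun i => ((v i : ↥V) : ↥U))) from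
        funext fun i => EMtV_val_term U K V v r s (ts i)] at hmr
      exact hmr.symm
    have liftU : (Structure.RelMap R (fun i => (ts i).realize
          (Sum.elim (fun a => EMtU U K (θ ∘ v) (r a)) (fun i => EMtU U K (θ ∘ v) (s i)))) ↔
        Structure.RelMap R (fun i => (ts i).realize
          (fun x => (Sum.elim r s x).realize (EMreal U K (θ ∘ v))))) := by
      have hmr := Language.StrongHomClass.map_rel (L := L)
        (Substructure.closure L (KStarSet K U)).subtype R
        (fun i => (ts i).realize
          (Sum.elim (fun a => EMtU U K (θ ∘ v) (r a)) (fun i => EMtU U K (θ ∘ v) (s i))))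
      rw [show (⇑(Substructure.closure L (KStarSet K U)).subtype ∘
          fun i => (ts i).realize
            (Sum.elim (fun a => EMtU U K (θ ∘ v) (r a)) (fun i => EMtU U K (θ ∘ v) (s i))))
          = fun i => (ts i).realize
              (fun x => (Sum.elim r s x).realize (EMreal U K (θ ∘ v))) from
        funext fun i => EMtU_val_term U K (θ ∘ v) r s (ts i)] at hmr
      exact hmr.symm
    constructor
    · intro hreal
      have hreal' : Structure.RelMap R (fun i => (ts i).realize
          (Sum.elim (fun a => EMtV U K V v (r a)) fun i => EMtV U K V v (s i))) := hreal
      show Structure.RelMap R (fun i => (ts i).realize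
          (Sum.elim (fun a => EMtU U K (θ ∘ v) (r a)) fun i => EMtU U K (θ ∘ v) (s i)))
      exact liftU.2 (key.1 (liftV.1 hreal'))
    · intro hreal
      have hreal' : Structure.RelMap R (fun i => (ts i).realize
          (Sum.elim (fun a => EMtU U K (θ ∘ v) (r a)) fun i => EMtU U K (θ ∘ v) (s i))) := hreal
      show Structure.RelMap R (fun i => (ts i).realize
          (Sum.elim (fun a => EMtV U K V v (r a)) fun i => EMtV U K V v (s i)))
      exact liftV.2 (key.2 (liftU.1 hreal'))
  | imp f g ihf ihg =>
    intro n v r s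
    rw [BoundedFormula.realize_imp, BoundedFormula.realize_imp]
    exact imp_congr (ihf v r s) (ihg v r s)
  | all χ ih =>
    intro n v r s
    rw [BoundedFormula.realize_all, BoundedFormula.realize_all]
    constructor
    · intro hreal z
      obtain ⟨m, w, r₁, hz⟩ := EMrepU U K z
      obtain ⟨w', hmix, hww⟩ := EM.insert_tuple θ hθ v (θ ∘ v) (fun i j => Iff.rfl) m w
      have hθapp : θ ∘ Fin.append v w' = Fin.append (θ ∘ v) (θ ∘ w') := EMcomp_append θ v w'
      have happ : ∀ i j : Fin (n + m),
          Fin.append (θ ∘ v) (θ ∘ w') i ≤ Fin.append (θ ∘ v) (θ ∘ w') j ↔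
          Fin.append (θ ∘ v) w i ≤ Fin.append (θ ∘ v) w j := by
        have hcase : ∀ (i : Fin (n + m)),
            (∃ i₀, i = Fin.castAdd m i₀) ∨ (∃ i₀, i = Fin.natAdd n i₀) :=
          fun i => Fin.addCases (fun i₀ => Or.inl ⟨i₀, rfl⟩) (fun i₀ => Or.inr ⟨i₀, rfl⟩) i
        intro i j
        rcases hcase i with ⟨i₀, rfl⟩ | ⟨i₀, rfl⟩ <;> rcases hcase j with ⟨j₀, rfl⟩ | ⟨j₀, rfl⟩ <;>
          simp only [Fin.append_left, Fin.append_right]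
        · exact ((hmix i₀ j₀).1).symm
        · exact ((hmix j₀ i₀).2).symm
        · exact (hww i₀ j₀).symm
      have h0 := hreal (EMtV U K V (Fin.append v w') (r₁.relabel (EMmap K (Fin.natAdd n))))
      have e1 : (fun a => EMtV U K V (Fin.append v w') ((r a).relabel (EMmap K (Fin.castAdd m))))
          = fun a => EMtV U K V v (r a) := funext fun a => EMtV_castAdd U K V v w' (r a)
      have e2 : (fun i => EMtV U K V (Fin.append v w')
            ((Fin.snoc (fun i₀ => (s i₀).relabel (EMmap K (Fin.castAdd m)))
              (r₁.relabel (EMmap K (Fin.natAdd n))) : _ → L.Term (EMGS K (n + m))) i))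
          = Fin.snoc (fun i => EMtV U K V v (s i))
              (EMtV U K V (Fin.append v w') (r₁.relabel (EMmap K (Fin.natAdd n)))) := by
        funext i
        refine Fin.lastCases ?_ (fun i₀ => ?_) i
        · rw [Fin.snoc_last, Fin.snoc_last]
        · rw [Fin.snoc_castSucc, Fin.snoc_castSucc, EMtV_castAdd]
      have h0' : χ.Realize
          (fun a => EMtV U K V (Fin.append v w') ((r a).relabel (EMmap K (Fin.castAdd m))))
          (fun i => EMtV U K V (Fin.append v w')
            ((Fin.snoc (fun i₀ => (s i₀).relabel (EMmap K (Fin.castAdd m)))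
              (r₁.relabel (EMmap K (Fin.natAdd n))) : _ → L.Term (EMGS K (n + m))) i)) := by
        rw [e1, e2]; exact h0
      have H1 := (ih (Fin.append v w')
        (fun a => (r a).relabel (EMmap K (Fin.castAdd m)))
        ((Fin.snoc (fun i₀ => (s i₀).relabel (EMmap K (Fin.castAdd m)))
          (r₁.relabel (EMmap K (Fin.natAdd n)))) : _ → L.Term (EMGS K (n + m)))).1 h0'
      rw [hθapp] at H1
      have H2 := EMhullInd U K φL hInd χ (Fin.append (θ ∘ v) (θ ∘ w')) (Fin.append (θ ∘ v) w)
        happ _ _ H1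
      have e1' : (fun a => EMtU U K (Fin.append (θ ∘ v) w) ((r a).relabel (EMmap K (Fin.castAdd m))))
          = fun a => EMtU U K (θ ∘ v) (r a) := funext fun a => EMtU_castAdd U K _ _ (r a)
      have e2' : (fun i => EMtU U K (Fin.append (θ ∘ v) w)
            ((Fin.snoc (fun i₀ => (s i₀).relabel (EMmap K (Fin.castAdd m)))
              (r₁.relabel (EMmap K (Fin.natAdd n))) : _ → L.Term (EMGS K (n + m))) i))
          = Fin.snoc (fun i => EMtU U K (θ ∘ v) (s i)) z := by
        funext i
        refine Fin.lastCases ?_ (fun i₀ => ?_) i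
        · rw [Fin.snoc_last, Fin.snoc_last, EMtU_natAdd]
          exact Subtype.ext hz.symm
        · rw [Fin.snoc_castSucc, Fin.snoc_castSucc, EMtU_castAdd]
      rw [e1', e2'] at H2
      exact H2
    · intro hreal y
      obtain ⟨m, w', r₁, hy⟩ := EMrepV U K V y
      have hθapp : θ ∘ Fin.append v w' = Fin.append (θ ∘ v) (θ ∘ w') := EMcomp_append θ v w'
      have h0 := hreal (EMtU U K (θ ∘ Fin.append v w') (r₁.relabel (EMmap K (Fin.natAdd n))))
      have e1 : (fun a => EMtU U K (θ ∘ Fin.append v w') ((r a).relabel (EMmap K (Fin.castAdd m))))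
          = fun a => EMtU U K (θ ∘ v) (r a) := by
        funext a
        rw [hθapp]
        exact EMtU_castAdd U K _ _ (r a)
      have e2 : (fun i => EMtU U K (θ ∘ Fin.append v w')
            ((Fin.snoc (fun i₀ => (s i₀).relabel (EMmap K (Fin.castAdd m)))
              (r₁.relabel (EMmap K (Fin.natAdd n))) : _ → L.Term (EMGS K (n + m))) i))
          = Fin.snoc (fun i => EMtU U K (θ ∘ v) (s i))
              (EMtU U K (θ ∘ Fin.append v w') (r₁.relabel (EMmap K (Fin.natAdd n)))) := by
        funext i
        refine Fin.lastCases ?_ (fun i₀ => ?_) i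
        · rw [Fin.snoc_last, Fin.snoc_last]
        · rw [Fin.snoc_castSucc, Fin.snoc_castSucc, hθapp, EMtU_castAdd]
      have h0' : χ.Realize
          (fun a => EMtU U K (θ ∘ Fin.append v w') ((r a).relabel (EMmap K (Fin.castAdd m))))
          (fun i => EMtU U K (θ ∘ Fin.append v w')
            ((Fin.snoc (fun i₀ => (s i₀).relabel (EMmap K (Fin.castAdd m)))
              (r₁.relabel (EMmap K (Fin.natAdd n))) : _ → L.Term (EMGS K (n + m))) i)) := by
        rw [e1, e2]; exact h0
      have H := (ih (Fin.append v w')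
        (fun a => (r a).relabel (EMmap K (Fin.castAdd m)))
        ((Fin.snoc (fun i₀ => (s i₀).relabel (EMmap K (Fin.castAdd m)))
          (r₁.relabel (EMmap K (Fin.natAdd n)))) : _ → L.Term (EMGS K (n + m)))).2 h0'
      have e1v : (fun a => EMtV U K V (Fin.append v w') ((r a).relabel (EMmap K (Fin.castAdd m))))
          = fun a => EMtV U K V v (r a) := funext fun a => EMtV_castAdd U K V v w' (r a)
      have e2v : (fun i => EMtV U K V (Fin.append v w')
            ((Fin.snoc (fun i₀ => (s i₀).relabel (EMmap K (Fin.castAdd m)))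
              (r₁.relabel (EMmap K (Fin.natAdd n))) : _ → L.Term (EMGS K (n + m))) i))
          = Fin.snoc (fun i => EMtV U K V v (s i)) y := by
        funext i
        refine Fin.lastCases ?_ (fun i₀ => ?_) i
        · rw [Fin.snoc_last, Fin.snoc_last, EMtV_natAdd]
          exact Subtype.ext hy.symm
        · rw [Fin.snoc_castSucc, Fin.snoc_castSucc, EMtV_castAdd]
      rw [e1v, e2v] at H
      exact H

end MainE

/-- Ehrenfeucht–Mostowski hypotheses: if `V ⊆ U` is a dense suborder without endpoints and
`θ : V → U` is order-preserving, then there is an `L`-elementary embedding `Θ` of `Sg^M(K*V)`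
into `Sg^M(K*U)` with `Θ(v) = θ(v)` for `v ∈ V` and `Θ(t^{M'}(v̄)) = t^{M'}(θ(v̄))` for every
`t ∈ K` and every tuple `v̄` from `V`. -/
theorem stmt6 {L L' : FirstOrder.Language} (φL : L →ᴸ L') (M : Type*)
    [L.Structure M] [L'.Structure M] [φL.IsExpansionOn M]
    (U : Set M) [LinearOrder ↥U] [DenselyOrdered ↥U] [NoMinOrder ↥U] [NoMaxOrder ↥U]
    (hUne : U.Nonempty)
    (hUgen : Substructure.closure L' U = ⊤)
    (hInd : ∀ (n : ℕ) (ψ : L'.Formula (Fin n)) (a b : Fin n → ↥U),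
      StrictMono a → StrictMono b →
      (ψ.Realize (fun i => (a i : M)) ↔ ψ.Realize fun i => (b i : M)))
    (K : Set (Σ n, L'.Term (Fin n)))
    (V : Set ↥U) [DenselyOrdered ↥V] [NoMinOrder ↥V] [NoMaxOrder ↥V] (hVne : V.Nonempty)
    (θ : ↥V → ↥U) (hθ : StrictMono θ) :
    ∃ Θ : ↥(Substructure.closure L (KStarSet K (Subtype.val '' V))) ↪ₑ[L]
        ↥(Substructure.closure L (KStarSet K U)),
      (∀ v : ↥V,
        (Θ ⟨((v : ↥U) : M),
            Substructure.subset_closure (Set.mem_union_left _ ⟨(v : ↥U), v.2, rfl⟩)⟩ : M) =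
          ((θ v : ↥U) : M)) ∧
      (∀ t : Σ n, L'.Term (Fin n), ∀ ht : t ∈ K, ∀ w : Fin t.1 → ↥V,
        (Θ ⟨t.2.realize (fun i => ((w i : ↥U) : M)),
            Substructure.subset_closure (Set.mem_union_right _
              ⟨t, ht, fun i => ⟨((w i : ↥U) : M), ⟨(w i : ↥U), (w i).2, rfl⟩⟩, rfl⟩)⟩ : M) =
          t.2.realize fun i => ((θ (w i) : ↥U) : M)) := by
  classical
  haveI : Nonempty ↥U := hUne.to_subtype
  haveI : Nonempty ↥V := hVne.to_subtype
  choose mf wf rf hf using EMrepV (L := L) U K V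
  -- well-definedness of the θ-image of a represented element
  have hW : ∀ {m₁ m₂ : ℕ} (w₁ : Fin m₁ → ↥V) (w₂ : Fin m₂ → ↥V)
      (r₁ : L.Term (EMGS K m₁)) (r₂ : L.Term (EMGS K m₂)),
      r₁.realize (EMreal U K fun i => ((w₁ i : ↥V) : ↥U)) =
        r₂.realize (EMreal U K fun i => ((w₂ i : ↥V) : ↥U)) →
      r₁.realize (EMreal U K (θ ∘ w₁)) = r₂.realize (EMreal U K (θ ∘ w₂)) := by
    intro m₁ m₂ w₁ w₂ r₁ r₂ heq
    have hvv : ∀ i j, ((Fin.append w₁ w₂ i : ↥V) : ↥U) ≤ ((Fin.append w₁ w₂ j : ↥V) : ↥U) ↔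
        (θ ∘ Fin.append w₁ w₂) i ≤ (θ ∘ Fin.append w₁ w₂) j := by
      intro i j
      rw [Subtype.coe_le_coe]
      exact (hθ.le_iff_le).symm
    have key := EMtransfer U K φL hInd hvv
      (Term.equal (Term.var (0 : Fin 2)) (Term.var 1))
      (![r₁.relabel (EMmap K (Fin.castAdd m₂)), r₂.relabel (EMmap K (Fin.natAdd m₁))])
    rw [Formula.realize_equal, Formula.realize_equal] at key
    simp only [Term.realize_var, Matrix.cons_val_zero, Matrix.cons_val_one,
      Matrix.head_cons] at key
    have eA : (r₁.relabel (EMmap K (Fin.castAdd m₂))).realize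
        (EMreal U K fun i => ((Fin.append w₁ w₂ i : ↥V) : ↥U))
        = r₁.realize (EMreal U K fun i => ((w₁ i : ↥V) : ↥U)) := by
      rw [Term.realize_relabel, EMcoe_append U V, EMreal_castAdd]
    have eB : (r₂.relabel (EMmap K (Fin.natAdd m₁))).realize
        (EMreal U K fun i => ((Fin.append w₁ w₂ i : ↥V) : ↥U))
        = r₂.realize (EMreal U K fun i => ((w₂ i : ↥V) : ↥U)) := by
      rw [Term.realize_relabel, EMcoe_append U V, EMreal_natAdd]
    have eA' : (r₁.relabel (EMmap K (Fin.castAdd m₂))).realize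
        (EMreal U K (θ ∘ Fin.append w₁ w₂)) = r₁.realize (EMreal U K (θ ∘ w₁)) := by
      rw [Term.realize_relabel, EMcomp_append θ w₁ w₂, EMreal_castAdd]
    have eB' : (r₂.relabel (EMmap K (Fin.natAdd m₁))).realize
        (EMreal U K (θ ∘ Fin.append w₁ w₂)) = r₂.realize (EMreal U K (θ ∘ w₂)) := by
      rw [Term.realize_relabel, EMcomp_append θ w₁ w₂, EMreal_natAdd]
    have h1 := key.1 (by rw [eA, eB]; exact heq)
    rw [eA', eB'] at h1
    exact h1
  refine ⟨⟨fun x => EMtU U K (θ ∘ wf x) (rf x), ?_⟩, ?_, ?_⟩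
  · -- elementarity
    intro n₀ φ x
    obtain ⟨N, W, ε, hWε⟩ := EMcomb (fun a => mf (x a)) (fun a => wf (x a))
    have hx : ∀ a, x a = EMtV U K V W ((rf (x a)).relabel (EMmap K (ε a))) := by
      intro a
      refine Subtype.ext ?_
      show (x a : M) = ((rf (x a)).relabel (EMmap K (ε a))).realize
        (EMreal U K fun i => ((W i : ↥V) : ↥U))
      rw [hf (x a), Term.realize_relabel]
      congr 1
      funext g
      rw [show ((EMreal U K fun i => ((W i : ↥V) : ↥U)) ∘ EMmap K (ε a)) g
          = EMreal U K ((fun i => ((W i : ↥V) : ↥U)) ∘ ε a) g from EMreal_comp U K _ _ g]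
      congr 1
      funext j
      show ((wf (x a) j : ↥V) : ↥U) = ((W (ε a j) : ↥V) : ↥U)
      rw [hWε a j]
    have hFx : ∀ a, EMtU U K (θ ∘ wf (x a)) (rf (x a))
        = EMtU U K (θ ∘ W) ((rf (x a)).relabel (EMmap K (ε a))) := by
      intro a
      refine Subtype.ext ?_
      show (rf (x a)).realize (EMreal U K (θ ∘ wf (x a)))
        = ((rf (x a)).relabel (EMmap K (ε a))).realize (EMreal U K (θ ∘ W))
      rw [Term.realize_relabel]
      congr 1
      funext g
      rw [show ((EMreal U K (θ ∘ W)) ∘ EMmap K (ε a)) g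
          = EMreal U K ((θ ∘ W) ∘ ε a) g from EMreal_comp U K _ _ g]
      congr 1
      funext j
      show θ (wf (x a) j) = θ (W (ε a j))
      rw [hWε a j]
    have key := EMmainE U K φL V θ hInd hθ φ W
      (fun a => (rf (x a)).relabel (EMmap K (ε a)))
      (finZeroElim : Fin 0 → L.Term (EMGS K N))
    beta_reduce at key
    show BoundedFormula.Realize φ
        ((fun x => EMtU U K (θ ∘ wf x) (rf x)) ∘ x) default ↔
      BoundedFormula.Realize φ x default
    rw [show (fun a => EMtV U K V W ((rf (x a)).relabel (EMmap K (ε a)))) = x from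
        (funext hx).symm] at key
    rw [show (fun a => EMtU U K (θ ∘ W) ((rf (x a)).relabel (EMmap K (ε a))))
        = ((fun x => EMtU U K (θ ∘ wf x) (rf x)) ∘ x) from (funext fun a => (hFx a)).symm] at key
    rw [show (fun i : Fin 0 => EMtU U K (θ ∘ W)
          ((finZeroElim : Fin 0 → L.Term (EMGS K N)) i)) = default from
        Subsingleton.elim _ _] at key
    rw [show (fun i : Fin 0 => EMtV U K V W
          ((finZeroElim : Fin 0 → L.Term (EMGS K N)) i)) = default from
        Subsingleton.elim _ _] at key
    exact key.symm
  · -- value on V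
    intro v
    have h1 := hW (wf ⟨((v : ↥U) : M),
        Substructure.subset_closure (Set.mem_union_left _ ⟨(v : ↥U), v.2, rfl⟩)⟩)
      (fun _ : Fin 1 => v)
      (rf ⟨((v : ↥U) : M),
        Substructure.subset_closure (Set.mem_union_left _ ⟨(v : ↥U), v.2, rfl⟩)⟩)
      (Term.var (Sum.inl 0))
      (by rw [← hf ⟨((v : ↥U) : M),
          Substructure.subset_closure (Set.mem_union_left _ ⟨(v : ↥U), v.2, rfl⟩)⟩]; rfl)
    exact h1
  · -- value on K-terms
    intro t ht w
    have h1 := hW (wf ⟨t.2.realize (fun i => ((w i : ↥U) : M)),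
        Substructure.subset_closure (Set.mem_union_right _
          ⟨t, ht, fun i => ⟨((w i : ↥U) : M), ⟨(w i : ↥U), (w i).2, rfl⟩⟩, rfl⟩)⟩)
      w
      (rf ⟨t.2.realize (fun i => ((w i : ↥U) : M)),
        Substructure.subset_closure (Set.mem_union_right _
          ⟨t, ht, fun i => ⟨((w i : ↥U) : M), ⟨(w i : ↥U), (w i).2, rfl⟩⟩, rfl⟩)⟩)
      (Term.var (Sum.inr ⟨⟨t, ht⟩, fun j => j⟩))
      (by rw [← hf ⟨t.2.realize (fun i => ((w i : ↥U) : M)),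
          Substructure.subset_closure (Set.mem_union_right _
            ⟨t, ht, fun i => ⟨((w i : ↥U) : M), ⟨(w i : ↥U), (w i).2, rfl⟩⟩, rfl⟩)⟩]; rfl)
    exact h1
end

section
/- Under the Ehrenfeucht–Mostowski hypotheses, every automorphism θ of the linear order ⟨U,≤⟩ extends to an automorphism Θ of the L-structure Sg^M(K*U) satisfying Θ(u) = θ(u) for u ∈ U and Θ(t^{M'}(ū)) = t^{M'}(θ(ū)) for every t ∈ K and every tuple ū from U. -/
open FirstOrder Language Cardinal

namespace EM7aux

open FirstOrder Language

/-- A finite set can be "sectioned" through some `Fin n`. -/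
lemma fin_section {α : Type*} [LinearOrder α] (A : Finset α) (a0 : α) :
    ∃ (n : ℕ) (g : α → Fin n) (v : Fin n → α), ∀ a ∈ A, v (g a) = a := by
  classical
  let e := A.orderIsoOfFin rfl
  refine ⟨A.card + 1,
    fun a => if h : a ∈ A then (e.symm ⟨a, h⟩).castSucc else Fin.last A.card,
    fun k => if h : (k : ℕ) < A.card then (e ⟨k, h⟩ : α) else a0, fun a ha => ?_⟩
  have h1 : (((e.symm ⟨a, ha⟩).castSucc : Fin (A.card + 1)) : ℕ) < A.card :=
    (e.symm ⟨a, ha⟩).isLt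
  simp only [dif_pos ha, dif_pos h1]
  have h2 : (⟨(((e.symm ⟨a, ha⟩).castSucc : Fin (A.card + 1)) : ℕ), h1⟩ : Fin A.card)
      = e.symm ⟨a, ha⟩ := by
    ext; simp
  rw [h2]
  simp

/-- Realization of a term only depends on the values of the variables in `varFinset`. -/
lemma realize_eqOn {L' : FirstOrder.Language} {M : Type*} [L'.Structure M] {α : Type*}
    [DecidableEq α] (t : L'.Term α) {w w' : α → M}
    (h : ∀ a ∈ t.varFinset, w a = w' a) : t.realize w = t.realize w' := by
  induction t with
  | var a => exact h a (by simp [Term.varFinset])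
  | func f ts ih =>
    simp only [Term.realize]
    congr 1
    funext i
    exact ih i fun a ha => h a (by
      simp only [Term.varFinset, Finset.mem_biUnion]
      exact ⟨i, Finset.mem_univ i, ha⟩)

variable {L' : FirstOrder.Language} {M : Type*} [L'.Structure M] {U : Set M}
  [LinearOrder ↥U]

/-- Indiscernibility for arbitrary tuples against their images under an order
automorphism. -/
lemma indArb
    (hInd : ∀ (n : ℕ) (ψ : L'.Formula (Fin n)) (a b : Fin n → ↥U),
      StrictMono a → StrictMono b →
      (ψ.Realize (fun i => (a i : M)) ↔ ψ.Realize fun i => (b i : M)))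
    (θ : ↥U ≃o ↥U) (n : ℕ) (ψ : L'.Formula (Fin n)) (v : Fin n → ↥U) :
    ψ.Realize (fun i => ((v i : ↥U) : M)) ↔
      ψ.Realize (fun i => ((θ (v i) : ↥U) : M)) := by
  classical
  set A : Finset ↥U := Finset.image v Finset.univ with hA
  let c : Fin A.card ≃o {x // x ∈ A} := A.orderIsoOfFin rfl
  let f : Fin n → Fin A.card := fun i =>
    c.symm ⟨v i, Finset.mem_image_of_mem v (Finset.mem_univ i)⟩
  have hvf : ∀ i, ((c (f i) : {x // x ∈ A}) : ↥U) = v i := fun i => by simp [f]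
  have h1 : StrictMono (fun k => ((c k : {x // x ∈ A}) : ↥U)) :=
    (Subtype.strictMono_coe _).comp c.strictMono
  have h2 : StrictMono (fun k => θ ((c k : {x // x ∈ A}) : ↥U)) :=
    θ.strictMono.comp h1
  have key := hInd A.card (ψ.relabel f) (fun k => ((c k : {x // x ∈ A}) : ↥U))
    (fun k => θ ((c k : {x // x ∈ A}) : ↥U)) h1 h2
  rw [Formula.realize_relabel, Formula.realize_relabel] at key
  convert key using 2 <;> (funext i; simp [Function.comp, hvf])

/-- Key lemma: term equalities over `U` are preserved (and reflected) by `θ`. -/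
lemma termEq
    (hInd : ∀ (n : ℕ) (ψ : L'.Formula (Fin n)) (a b : Fin n → ↥U),
      StrictMono a → StrictMono b →
      (ψ.Realize (fun i => (a i : M)) ↔ ψ.Realize fun i => (b i : M)))
    (θ : ↥U ≃o ↥U) (hUne : U.Nonempty) (s s' : L'.Term ↥U) :
    (s.realize (fun u : ↥U => (u : M)) = s'.realize (fun u : ↥U => (u : M))) ↔
      (s.realize (fun u : ↥U => ((θ u : ↥U) : M)) =
        s'.realize (fun u : ↥U => ((θ u : ↥U) : M))) := by
  classical
  obtain ⟨n, g, v, hgv⟩ := fin_section (s.varFinset ∪ s'.varFinset)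
    (⟨hUne.choose, hUne.choose_spec⟩ : ↥U)
  have key := indArb hInd θ n ((s.relabel g).equal (s'.relabel g)) v
  simp only [Formula.realize_equal, Term.realize_relabel] at key
  have e1 : s.realize ((fun i => ((v i : ↥U) : M)) ∘ g) =
      s.realize (fun u : ↥U => (u : M)) :=
    realize_eqOn s fun a ha => congrArg _ (hgv a (Finset.mem_union_left _ ha))
  have e2 : s'.realize ((fun i => ((v i : ↥U) : M)) ∘ g) =
      s'.realize (fun u : ↥U => (u : M)) :=
    realize_eqOn s' fun a ha => congrArg _ (hgv a (Finset.mem_union_right _ ha))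
  have e3 : s.realize ((fun i => ((θ (v i) : ↥U) : M)) ∘ g) =
      s.realize (fun u : ↥U => ((θ u : ↥U) : M)) :=
    realize_eqOn s fun a ha => congrArg (fun z => ((θ z : ↥U) : M))
      (hgv a (Finset.mem_union_left _ ha))
  have e4 : s'.realize ((fun i => ((θ (v i) : ↥U) : M)) ∘ g) =
      s'.realize (fun u : ↥U => ((θ u : ↥U) : M)) :=
    realize_eqOn s' fun a ha => congrArg (fun z => ((θ z : ↥U) : M))
      (hgv a (Finset.mem_union_right _ ha))
  rw [e1, e2, e3, e4] at key
  exact key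

/-- Key lemma: relations among terms over `U` are preserved (and reflected) by `θ`. -/
lemma relEq
    (hInd : ∀ (n : ℕ) (ψ : L'.Formula (Fin n)) (a b : Fin n → ↥U),
      StrictMono a → StrictMono b →
      (ψ.Realize (fun i => (a i : M)) ↔ ψ.Realize fun i => (b i : M)))
    (θ : ↥U ≃o ↥U) (hUne : U.Nonempty) {k : ℕ} (R : L'.Relations k)
    (s : Fin k → L'.Term ↥U) :
    (Structure.RelMap R (fun i => (s i).realize (fun u : ↥U => (u : M))) ↔
      Structure.RelMap R (fun i => (s i).realize (fun u : ↥U => ((θ u : ↥U) : M)))) := by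
  classical
  obtain ⟨n, g, v, hgv⟩ := fin_section (Finset.univ.biUnion fun i => (s i).varFinset)
    (⟨hUne.choose, hUne.choose_spec⟩ : ↥U)
  have key := indArb hInd θ n (R.formula fun i => (s i).relabel g) v
  simp only [Formula.realize_rel, Term.realize_relabel] at key
  have e1 : ∀ i, (s i).realize ((fun j => ((v j : ↥U) : M)) ∘ g) =
      (s i).realize (fun u : ↥U => (u : M)) := fun i =>
    realize_eqOn (s i) fun a ha => congrArg _
      (hgv a (Finset.mem_biUnion.2 ⟨i, Finset.mem_univ i, ha⟩))
  have e2 : ∀ i, (s i).realize ((fun j => ((θ (v j) : ↥U) : M)) ∘ g) =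
      (s i).realize (fun u : ↥U => ((θ u : ↥U) : M)) := fun i =>
    realize_eqOn (s i) fun a ha => congrArg (fun z => ((θ z : ↥U) : M))
      (hgv a (Finset.mem_biUnion.2 ⟨i, Finset.mem_univ i, ha⟩))
  simp only [e1, e2] at key
  exact key

end EM7aux

/-- Ehrenfeucht–Mostowski hypotheses: every automorphism `θ` of the linear order `⟨U, ≤⟩`
extends to an automorphism `Θ` of the `L`-structure `Sg^M(K*U)` with `Θ(u) = θ(u)` for `u ∈ U`
and `Θ(t^{M'}(ū)) = t^{M'}(θ(ū))` for every `t ∈ K` and every tuple `ū` from `U`. -/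
theorem stmt7 {L L' : FirstOrder.Language} (φL : L →ᴸ L') (M : Type*)
    [L.Structure M] [L'.Structure M] [φL.IsExpansionOn M]
    (U : Set M) [LinearOrder ↥U] [DenselyOrdered ↥U] [NoMinOrder ↥U] [NoMaxOrder ↥U]
    (hUne : U.Nonempty)
    (hUgen : Substructure.closure L' U = ⊤)
    (hInd : ∀ (n : ℕ) (ψ : L'.Formula (Fin n)) (a b : Fin n → ↥U),
      StrictMono a → StrictMono b →
      (ψ.Realize (fun i => (a i : M)) ↔ ψ.Realize fun i => (b i : M)))
    (K : Set (Σ n, L'.Term (Fin n)))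
    (θ : ↥U ≃o ↥U) :
    ∃ Θ : ↥(Substructure.closure L (KStarSet K U)) ≃[L]
        ↥(Substructure.closure L (KStarSet K U)),
      (∀ u : ↥U,
        (Θ ⟨(u : M), Substructure.subset_closure (Set.mem_union_left _ u.2)⟩ : M) =
          ((θ u : ↥U) : M)) ∧
      (∀ t : Σ n, L'.Term (Fin n), ∀ ht : t ∈ K, ∀ w : Fin t.1 → ↥U,
        (Θ ⟨t.2.realize (fun i => (w i : M)),
            Substructure.subset_closure (Set.mem_union_right _ ⟨t, ht, w, rfl⟩)⟩ : M) =
          t.2.realize fun i => ((θ (w i) : ↥U) : M)) := by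
  classical
  set N := Substructure.closure L (KStarSet K U) with hN
  -- per-generator terms
  let sg : ↥(KStarSet K U) → L'.Term ↥U := fun g =>
    if h : (g : M) ∈ U then Term.var ⟨g, h⟩
    else
      ((g.2.resolve_left h).choose.2).relabel (g.2.resolve_left h).choose_spec.2.choose
  have hsg1 : ∀ g : ↥(KStarSet K U), (sg g).realize (fun u : ↥U => (u : M)) = g := by
    intro g
    by_cases h : (g : M) ∈ U
    · simp [sg, dif_pos h]
    · simp only [sg, dif_neg h, Term.realize_relabel]
      exact ((g.2.resolve_left h).choose_spec.2.choose_spec).symm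
  have hsg2 : ∀ (σ : ↥U ≃o ↥U) (g : ↥(KStarSet K U)),
      (sg g).realize (fun u : ↥U => ((σ u : ↥U) : M)) ∈ KStarSet K U := by
    intro σ g
    by_cases h : (g : M) ∈ U
    · simp only [sg, dif_pos h, Term.realize_var]
      exact Set.mem_union_left _ (σ ⟨g, h⟩).2
    · simp only [sg, dif_neg h, Term.realize_relabel]
      exact Set.mem_union_right _
        ⟨(g.2.resolve_left h).choose, (g.2.resolve_left h).choose_spec.1,
          fun i => σ ((g.2.resolve_left h).choose_spec.2.choose i), rfl⟩
  -- the twisted map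
  let F : (↥U ≃o ↥U) → M → M := fun σ x =>
    if h : ∃ s : L'.Term ↥U, s.realize (fun u : ↥U => (u : M)) = x then
      h.choose.realize (fun u : ↥U => ((σ u : ↥U) : M))
    else x
  have hC : ∀ (σ : ↥U ≃o ↥U) (x : M) (s : L'.Term ↥U),
      s.realize (fun u : ↥U => (u : M)) = x →
      F σ x = s.realize (fun u : ↥U => ((σ u : ↥U) : M)) := by
    intro σ x s hs
    have hex : ∃ s : L'.Term ↥U, s.realize (fun u : ↥U => (u : M)) = x := ⟨s, hs⟩
    simp only [F, dif_pos hex]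
    exact (EM7aux.termEq hInd σ hUne hex.choose s).1 (hex.choose_spec.trans hs.symm)
  -- bridge: L-terms over K*U to L'-terms over U
  have hst : ∀ (t : L.Term ↥(KStarSet K U)) (ρ : ↥U → M),
      ((φL.onTerm t).subst sg).realize ρ = t.realize (fun g => (sg g).realize ρ) := by
    intro t ρ
    rw [Term.realize_subst, φL.realize_onTerm]
  have hrep : ∀ x ∈ N, ∃ s : L'.Term ↥U,
      s.realize (fun u : ↥U => (u : M)) = x ∧
      ∀ σ : ↥U ≃o ↥U, s.realize (fun u : ↥U => ((σ u : ↥U) : M)) ∈ N := by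
    intro x hx
    obtain ⟨t, ht⟩ := Substructure.mem_closure_iff_exists_term.1 hx
    refine ⟨(φL.onTerm t).subst sg, ?_, ?_⟩
    · rw [hst]
      rw [← ht]
      congr 1
      funext g
      exact hsg1 g
    · intro σ
      rw [hst]
      refine Substructure.mem_closure_iff_exists_term.2
        ⟨t.relabel fun g => (⟨(sg g).realize (fun u : ↥U => ((σ u : ↥U) : M)),
          hsg2 σ g⟩ : ↥(KStarSet K U)), ?_⟩
      rw [Term.realize_relabel]
      rfl
  have hFN : ∀ (σ : ↥U ≃o ↥U), ∀ x ∈ N, F σ x ∈ N := by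
    intro σ x hx
    obtain ⟨s, hs1, hs2⟩ := hrep x hx
    rw [hC σ x s hs1]
    exact hs2 σ
  have hinv : ∀ (σ : ↥U ≃o ↥U), ∀ x ∈ N, F σ.symm (F σ x) = x := by
    intro σ x hx
    obtain ⟨s, hs1, -⟩ := hrep x hx
    rw [hC σ x s hs1]
    have : (s.relabel (fun u : ↥U => σ u)).realize (fun u : ↥U => (u : M)) =
        s.realize (fun u : ↥U => ((σ u : ↥U) : M)) := by
      rw [Term.realize_relabel]; rfl
    rw [hC σ.symm _ _ this, Term.realize_relabel]
    rw [← hs1]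
    congr 1
    funext u
    simp
  refine ⟨{ toFun := fun x => ⟨F θ x, hFN θ x x.2⟩,
            invFun := fun x => ⟨F θ.symm x, hFN θ.symm x x.2⟩,
            left_inv := fun x => Subtype.ext (hinv θ x x.2),
            right_inv := fun x => Subtype.ext (by
              have := hinv θ.symm x x.2
              simpa using this),
            map_fun' := ?_, map_rel' := ?_ }, ?_, ?_⟩
  · intro n f x
    apply Subtype.ext
    have hx : ∀ i, ∃ s : L'.Term ↥U,
        s.realize (fun u : ↥U => (u : M)) = (x i : M) := fun i =>
      ⟨(hrep (x i) (x i).2).choose, (hrep (x i) (x i).2).choose_spec.1⟩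
    choose s hs using hx
    have hfun2 : (fun i => (s i).realize (fun u : ↥U => ((θ u : ↥U) : M))) =
        (fun i => F θ ((x i : M))) := funext fun i => (hC θ _ _ (hs i)).symm
    have hS : (Term.func (φL.onFunction f) s : L'.Term ↥U).realize
        (fun u : ↥U => (u : M)) = Structure.funMap f (fun i => (x i : M)) := by
      simp only [Term.realize, φL.map_onFunction]
      congr 1
      funext i
      exact hs i
    show F θ (Structure.funMap f (fun i => (x i : M))) =
      Structure.funMap f (fun i => F θ ((x i : M)))
    rw [hC θ _ _ hS]
    simp only [Term.realize, φL.map_onFunction]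
    rw [hfun2]
  · intro n r x
    have hx : ∀ i, ∃ s : L'.Term ↥U,
        s.realize (fun u : ↥U => (u : M)) = (x i : M) := fun i =>
      ⟨(hrep (x i) (x i).2).choose, (hrep (x i) (x i).2).choose_spec.1⟩
    choose s hs using hx
    have key := EM7aux.relEq hInd θ hUne (φL.onRelation r) s
    rw [φL.map_onRelation, φL.map_onRelation] at key
    have hfun1 : (fun i => (s i).realize (fun u : ↥U => (u : M))) =
        (fun i => ((x i : M))) := funext hs
    have hfun2 : (fun i => (s i).realize (fun u : ↥U => ((θ u : ↥U) : M))) =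
        (fun i => F θ ((x i : M))) := funext fun i => (hC θ _ _ (hs i)).symm
    rw [hfun1, hfun2] at key
    show Structure.RelMap r (fun i => F θ ((x i : M))) ↔
      Structure.RelMap r (fun i => ((x i : M)))
    exact key.symm
  · intro u
    show F θ (u : M) = _
    have : (Term.var u : L'.Term ↥U).realize (fun u : ↥U => (u : M)) = (u : M) := rfl
    rw [hC θ _ _ this]
    rfl
  · intro t ht w
    show F θ _ = _
    have : (t.2.relabel w).realize (fun u : ↥U => (u : M)) =
        t.2.realize (fun i => (w i : M)) := by
      rw [Term.realize_relabel]; rfl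
    rw [hC θ _ _ this, Term.realize_relabel]
    rfl
end

section
/- Under the Ehrenfeucht–Mostowski hypotheses, if V ⊆ U is such that ⟨V,≤⟩ (with the order inherited from U) is a nonempty dense linear order without endpoints, then Sg^M(K*V) is an elementary substructure of Sg^M(K*U): Sg^M(K*V) is contained in Sg^M(K*U) and the inclusion map is an L-elementary embedding. -/
open FirstOrder Language Cardinal
open FirstOrder.Language.Structure

set_option linter.unusedSectionVars false
set_option linter.unusedVariables false

section EMHelpers

variable {L L' : FirstOrder.Language} {M : Type*} [L.Structure M] [L'.Structure M]

/-- Terms whose values at tuples from `W` always land in `Sg_L(K*W)`. -/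
def GoodTerm (L : FirstOrder.Language) (M : Type*) [L.Structure M] [L'.Structure M]
    (K : Set (Σ n, L'.Term (Fin n))) {m : ℕ} (t : L'.Term (Fin m)) : Prop :=
  ∀ (W : Set M) (w : Fin m → M), (∀ i, w i ∈ W) →
    t.realize w ∈ Substructure.closure L (KStarSet K W)

theorem goodTerm_relabel {K : Set (Σ n, L'.Term (Fin n))} {m m' : ℕ}
    {t : L'.Term (Fin m)} (h : GoodTerm L M K t) (g : Fin m → Fin m') :
    GoodTerm L M K (t.relabel g) := fun W w hw => by
  rw [Term.realize_relabel]
  exact h W (w ∘ g) fun i => hw (g i)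

theorem em_rep (φL : L →ᴸ L') [φL.IsExpansionOn M] (K : Set (Σ n, L'.Term (Fin n)))
    (U : Set M) [LinearOrder ↥U] (W : Set ↥U) {x : M}
    (hx : x ∈ Substructure.closure L (KStarSet K (Subtype.val '' W))) :
    ∃ (m : ℕ) (t : L'.Term (Fin m)) (u : Fin m → ↥U), StrictMono u ∧ (∀ i, u i ∈ W) ∧
      GoodTerm L M K t ∧ x = t.realize (fun i => (u i : M)) := by
  classical
  refine Substructure.closure_induction hx ?gen ?fn
  case gen =>
    rintro y (⟨u0, hu0, rfl⟩ | ⟨t, htK, v, rfl⟩)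
    · refine ⟨1, Term.var 0, fun _ => u0, fun a b hab => absurd (Subsingleton.elim a b) hab.ne,
        fun _ => hu0, ?_, rfl⟩
      intro W' w hw
      exact Substructure.subset_closure (Set.mem_union_left _ (hw 0))
    · choose w hwW hwv using fun i => (v i).2
      set sfin : Finset ↥U := Finset.image w Finset.univ with hsfin
      have hmem : ∀ j, ∃ i : Fin sfin.card, sfin.orderEmbOfFin rfl i = w j := by
        intro j
        have : w j ∈ Set.range (sfin.orderEmbOfFin rfl) := by
          rw [Finset.range_orderEmbOfFin]
          exact Finset.mem_coe.2 (Finset.mem_image_of_mem w (Finset.mem_univ j))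
        exact this
      choose g hg using hmem
      refine ⟨sfin.card, t.2.relabel g, sfin.orderEmbOfFin rfl,
        (sfin.orderEmbOfFin rfl).strictMono, ?_, ?_, ?_⟩
      · intro i
        have h1 : sfin.orderEmbOfFin rfl i ∈ sfin := sfin.orderEmbOfFin_mem rfl i
        obtain ⟨j, -, hj⟩ := Finset.mem_image.1 h1
        rw [← hj]; exact hwW j
      · intro W' w' hw'
        rw [Term.realize_relabel]
        refine Substructure.subset_closure (Set.mem_union_right _ ?_)
        exact ⟨t, htK, fun j => ⟨w' (g j), hw' (g j)⟩, rfl⟩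
      · rw [Term.realize_relabel]
        congr 1
        funext j
        simp only [Function.comp_apply, hg j, hwv j]
  case fn =>
    intro n f x hx
    choose m t u hmono hW hgood hval using hx
    set sfin : Finset ↥U := Finset.univ.biUnion (fun i => Finset.image (u i) Finset.univ)
      with hsfin
    have hmem : ∀ i j, ∃ a : Fin sfin.card, sfin.orderEmbOfFin rfl a = u i j := by
      intro i j
      have : u i j ∈ Set.range (sfin.orderEmbOfFin rfl) := by
        rw [Finset.range_orderEmbOfFin]
        exact Finset.mem_coe.2 (Finset.mem_biUnion.2
          ⟨i, Finset.mem_univ i, Finset.mem_image_of_mem _ (Finset.mem_univ j)⟩)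
      exact this
    choose g hg using hmem
    refine ⟨sfin.card, Term.func (φL.onFunction f) (fun i => (t i).relabel (g i)),
      sfin.orderEmbOfFin rfl, (sfin.orderEmbOfFin rfl).strictMono, ?_, ?_, ?_⟩
    · intro a
      have h1 : sfin.orderEmbOfFin rfl a ∈ sfin := sfin.orderEmbOfFin_mem rfl a
      obtain ⟨i, -, hi⟩ := Finset.mem_biUnion.1 h1
      obtain ⟨j, -, hj⟩ := Finset.mem_image.1 hi
      rw [← hj]; exact hW i j
    · intro W' w' hw'
      show Term.realize w' (Term.func (φL.onFunction f) (fun i => (t i).relabel (g i))) ∈ _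
      have h2 : Term.realize w' (Term.func (φL.onFunction f)
          (fun i => (t i).relabel (g i))) =
          funMap f (fun i => ((t i).relabel (g i)).realize w') := by
        simp only [Term.realize, φL.map_onFunction]
      rw [h2]
      exact Substructure.fun_mem _ f (fun i => ((t i).relabel (g i)).realize w')
        fun i => by
          have h3 : Term.realize w' ((t i).relabel (g i)) ∈
              Substructure.closure L (KStarSet K W') := by
            rw [Term.realize_relabel]
            exact hgood i W' (w' ∘ g i) fun j => hw' (g i j)
          exact h3
    · have h2 : Term.realize (fun a => ((sfin.orderEmbOfFin rfl a : ↥U) : M))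
          (Term.func (φL.onFunction f) (fun i => (t i).relabel (g i))) =
          funMap f (fun i => ((t i).relabel (g i)).realize
            (fun a => ((sfin.orderEmbOfFin rfl a : ↥U) : M))) := by
        simp only [Term.realize, φL.map_onFunction]
      rw [h2]
      congr 1
      funext i
      rw [Term.realize_relabel, hval i]
      congr 1
      funext j
      simp only [Function.comp_apply, hg i j]

/-- Composition of an `L`-term with `L'`-terms substituted for its variables. -/
def compTermEM (φL : L →ᴸ L') {n m : ℕ} (t : Fin n → L'.Term (Fin m))
    (T : L.Term (Empty ⊕ Fin n)) : L'.Term (Fin m) :=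
  (φL.onTerm T).subst (Sum.elim (fun e => Empty.elim e) t)

theorem realize_compTermEM (φL : L →ᴸ L') [φL.IsExpansionOn M] {n m : ℕ}
    (t : Fin n → L'.Term (Fin m)) (T : L.Term (Empty ⊕ Fin n)) (w : Fin m → M) :
    (compTermEM φL t T).realize w =
      T.realize (Sum.elim (fun e => Empty.elim e) (fun i => (t i).realize w)) := by
  rw [compTermEM, Term.realize_subst, LHom.realize_onTerm]
  congr 1
  funext a
  cases a with
  | inl e => exact e.elim
  | inr i => rfl

/-- Merging two increasing tuples from a linearly ordered set into one. -/
theorem mergeEM {α : Type*} [LinearOrder α] {m1 m2 : ℕ} (u1 : Fin m1 → α) (u2 : Fin m2 → α)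
    (hu1 : StrictMono u1) (hu2 : StrictMono u2) :
    ∃ (k : ℕ) (c : Fin k → α) (p : Fin m1 → Fin k) (q : Fin m2 → Fin k),
      StrictMono c ∧ StrictMono p ∧ StrictMono q ∧
      (∀ j, c (p j) = u1 j) ∧ (∀ j, c (q j) = u2 j) := by
  classical
  set sfin : Finset α := Finset.image u1 Finset.univ ∪ Finset.image u2 Finset.univ with hsfin
  set c := sfin.orderEmbOfFin rfl with hc
  have hmem1 : ∀ j, ∃ a, c a = u1 j := by
    intro j
    have : u1 j ∈ Set.range c := by
      rw [hc, Finset.range_orderEmbOfFin]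
      exact Finset.mem_coe.2 (Finset.mem_union_left _
        (Finset.mem_image_of_mem u1 (Finset.mem_univ j)))
    exact this
  have hmem2 : ∀ j, ∃ a, c a = u2 j := by
    intro j
    have : u2 j ∈ Set.range c := by
      rw [hc, Finset.range_orderEmbOfFin]
      exact Finset.mem_coe.2 (Finset.mem_union_right _
        (Finset.mem_image_of_mem u2 (Finset.mem_univ j)))
    exact this
  choose p hp using hmem1
  choose q hq using hmem2
  refine ⟨sfin.card, c, p, q, c.strictMono, ?_, ?_, hp, hq⟩
  · intro a b hab
    have : c (p a) < c (p b) := by rw [hp, hp]; exact hu1 hab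
    exact c.strictMono.lt_iff_lt.1 this
  · intro a b hab
    have : c (q a) < c (q b) := by rw [hq, hq]; exact hu2 hab
    exact c.strictMono.lt_iff_lt.1 this


end EMHelpers

set_option linter.unusedSectionVars false
section Pattern

variable {β : Type*} [LinearOrder β]

theorem strictMono_consEM {m : ℕ} {c0 : β} {c : Fin m → β}
    (h0 : ∀ i, c0 < c i) (hc : StrictMono c) : StrictMono (Fin.cons c0 c) := by
  intro a b hab
  induction b using Fin.cases with
  | zero => exact absurd hab (by simp)
  | succ j =>
    induction a using Fin.cases with
    | zero => simpa using h0 j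
    | succ i =>
      simp only [Fin.cons_succ]
      exact hc (Fin.succ_lt_succ_iff.1 hab)

variable [DenselyOrdered β] [NoMinOrder β] [NoMaxOrder β]

theorem patternAux : ∀ (m : ℕ) {k : ℕ} (p : Fin k → Fin m) (v : Fin k → β),
    StrictMono p → StrictMono v → ∀ lb : β, (∀ j, lb < v j) →
    ∃ c : Fin m → β, StrictMono c ∧ (∀ i, lb < c i) ∧ ∀ j, c (p j) = v j := by
  intro m
  induction m with
  | zero =>
    intro k p v _ _ lb _
    match k with
    | 0 => exact ⟨Fin.elim0, fun a b hab => absurd hab (by simp), fun i => i.elim0,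
        fun j => j.elim0⟩
    | k + 1 => exact (p 0).elim0
  | succ m ih =>
    intro k p v hp hv lb hlb
    match k, p, v, hp, hv, hlb with
    | 0, p, v, hp, hv, hlb =>
      obtain ⟨c0, hc0⟩ := exists_gt lb
      obtain ⟨c', hc'mono, hc'lb, -⟩ :=
        ih (k := 0) Fin.elim0 Fin.elim0 (fun a b hab => absurd hab (by exact a.elim0))
          (fun a b hab => absurd hab (by exact a.elim0)) c0 (fun j => j.elim0)
      refine ⟨Fin.cons c0 c', strictMono_consEM hc'lb hc'mono, ?_, fun j => j.elim0⟩
      intro i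
      induction i using Fin.cases with
      | zero => simpa using hc0
      | succ j => simpa using hc0.trans (hc'lb j)
    | k + 1, p, v, hp, hv, hlb =>
      by_cases h0 : p 0 = 0
      · -- first prescribed position is 0
        have hne : ∀ j : Fin k, p j.succ ≠ 0 := by
          intro j h
          have : p 0 < p j.succ := hp (Fin.succ_pos j)
          rw [h, h0] at this
          exact lt_irrefl _ this
        set p' : Fin k → Fin m := fun j => (p j.succ).pred (hne j) with hp'def
        have hp' : StrictMono p' := by
          intro a b hab
          simp only [hp'def]
          rw [Fin.pred_lt_pred_iff]
          exact hp (Fin.succ_lt_succ_iff.2 hab)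
        have hv' : StrictMono (fun j : Fin k => v j.succ) :=
          fun a b hab => hv (Fin.succ_lt_succ_iff.2 hab)
        obtain ⟨c', hc'mono, hc'lb, hc'val⟩ :=
          ih p' (fun j => v j.succ) hp' hv' (v 0) (fun j => hv (Fin.succ_pos j))
        refine ⟨Fin.cons (v 0) c', strictMono_consEM hc'lb hc'mono, ?_, ?_⟩
        · intro i
          induction i using Fin.cases with
          | zero => simpa using hlb 0
          | succ j => simpa using (hlb 0).trans (hc'lb j)
        · intro j
          induction j using Fin.cases with
          | zero => rw [h0]; simp
          | succ j =>
            have : p j.succ = (p' j).succ := (Fin.succ_pred _ (hne j)).symm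
            rw [this, Fin.cons_succ]
            exact hc'val j
      · -- no prescribed position is 0
        have hne : ∀ j : Fin (k + 1), p j ≠ 0 := by
          intro j h
          rcases eq_or_lt_of_le (Fin.zero_le j) with rfl | hj
          · exact h0 h
          · have : p 0 < p j := hp hj
            rw [h] at this
            exact absurd this (by simp)
        obtain ⟨c0, hc0l, hc0r⟩ := exists_between (hlb 0)
        set p' : Fin (k + 1) → Fin m := fun j => (p j).pred (hne j) with hp'def
        have hp' : StrictMono p' := by
          intro a b hab
          simp only [hp'def]
          rw [Fin.pred_lt_pred_iff]
          exact hp hab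
        obtain ⟨c', hc'mono, hc'lb, hc'val⟩ :=
          ih p' v hp' hv c0 (fun j => hc0r.trans_le (hv.monotone (Fin.zero_le j)))
        refine ⟨Fin.cons c0 c', strictMono_consEM hc'lb hc'mono, ?_, ?_⟩
        · intro i
          induction i using Fin.cases with
          | zero => simpa using hc0l
          | succ j => simpa using hc0l.trans (hc'lb j)
        · intro j
          have : p j = (p' j).succ := (Fin.succ_pred _ (hne j)).symm
          rw [this, Fin.cons_succ]
          exact hc'val j

theorem patternEM [Nonempty β] {m k : ℕ} (p : Fin k → Fin m) (v : Fin k → β)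
    (hp : StrictMono p) (hv : StrictMono v) :
    ∃ c : Fin m → β, StrictMono c ∧ ∀ j, c (p j) = v j := by
  match k, p, v, hp, hv with
  | 0, p, v, hp, hv =>
    obtain ⟨lb⟩ := ‹Nonempty β›
    obtain ⟨c, hc, -, hval⟩ := patternAux m p v hp hv lb (fun j => j.elim0)
    exact ⟨c, hc, hval⟩
  | k + 1, p, v, hp, hv =>
    obtain ⟨lb, hlb⟩ := exists_lt (v 0)
    obtain ⟨c, hc, -, hval⟩ := patternAux m p v hp hv lb
      (fun j => hlb.trans_le (hv.monotone (Fin.zero_le j)))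
    exact ⟨c, hc, hval⟩

end Pattern

section Indisc

variable {L L' : FirstOrder.Language} {M : Type*} [L.Structure M] [L'.Structure M]

theorem indiscEM (φL : L →ᴸ L') [φL.IsExpansionOn M] (K : Set (Σ n, L'.Term (Fin n)))
    (U : Set M) [LinearOrder ↥U] [DenselyOrdered ↥U] [NoMinOrder ↥U] [NoMaxOrder ↥U]
    (hUne : U.Nonempty)
    (hInd : ∀ (n : ℕ) (ψ : L'.Formula (Fin n)) (a b : Fin n → ↥U),
      StrictMono a → StrictMono b →
      (ψ.Realize (fun i => (a i : M)) ↔ ψ.Realize fun i => (b i : M))) :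
    ∀ {n : ℕ} (φ : L.BoundedFormula Empty n) {m : ℕ} (t : Fin n → L'.Term (Fin m)),
      (∀ i, GoodTerm L M K (t i)) → ∀ (u u' : Fin m → ↥U), StrictMono u → StrictMono u' →
      ∀ (xs xs' : Fin n → ↥(Substructure.closure L (KStarSet K U))),
      (∀ i, (xs i : M) = (t i).realize (fun j => (u j : M))) →
      (∀ i, (xs' i : M) = (t i).realize (fun j => (u' j : M))) →
      (φ.Realize default xs ↔ φ.Realize default xs') := by
  have : Nonempty ↥U := hUne.to_subtype
  intro n φ
  induction φ with
  | falsum => exact fun _ _ _ _ _ _ _ _ _ _ => Iff.rfl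
  | @equal n t₁ t₂ =>
    intro m t ht u u' hu hu' xs xs' hxs hxs'
    have key : ∀ (u : Fin m → ↥U) (xs : Fin n → ↥(Substructure.closure L (KStarSet K U))),
        (∀ i, (xs i : M) = (t i).realize (fun j => (u j : M))) →
        ((BoundedFormula.equal t₁ t₂).Realize default xs ↔
          (Term.equal (compTermEM φL t t₁) (compTermEM φL t t₂)).Realize
            (fun j => ((u j : M)))) := by
      intro u xs hxs
      rw [Formula.realize_equal, realize_compTermEM, realize_compTermEM]
      rw [show (BoundedFormula.equal t₁ t₂).Realize default xs ↔
        (t₁.realize (Sum.elim default xs) = t₂.realize (Sum.elim default xs)) from Iff.rfl]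
      rw [← Subtype.coe_inj]
      have hval : ∀ (T : FirstOrder.Language.Term L (Empty ⊕ Fin n)),
          ((T.realize (Sum.elim default xs) :
            ↥(FirstOrder.Language.Substructure.closure L (KStarSet K U))) : M) =
          T.realize (Sum.elim (fun e => Empty.elim e)
            (fun i => (t i).realize (fun j => ((u j : M))))) := by
        intro T
        rw [← FirstOrder.Language.realize_term_substructure]
        congr 1
        funext a
        cases a with
        | inl e => exact e.elim
        | inr i => exact (hxs i)
      rw [hval t₁, hval t₂]
    rw [key u xs hxs, key u' xs' hxs']
    exact hInd m _ u u' hu hu'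
  | @rel n k R ts =>
    intro m t ht u u' hu hu' xs xs' hxs hxs'
    have key : ∀ (u : Fin m → ↥U) (xs : Fin n → ↥(Substructure.closure L (KStarSet K U))),
        (∀ i, (xs i : M) = (t i).realize (fun j => (u j : M))) →
        ((BoundedFormula.rel R ts).Realize default xs ↔
          ((φL.onRelation R).formula (fun i => compTermEM φL t (ts i))).Realize
            (fun j => ((u j : M)))) := by
      intro u xs hxs
      rw [FirstOrder.Language.Formula.realize_rel]
      rw [show (BoundedFormula.rel R ts).Realize default xs ↔
        FirstOrder.Language.Structure.RelMap R
          (fun i => (ts i).realize (Sum.elim default xs)) from Iff.rfl]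
      rw [show (FirstOrder.Language.Structure.RelMap R
          (fun i => (ts i).realize (Sum.elim default xs)) : Prop) ↔
        FirstOrder.Language.Structure.RelMap R
          (fun i => (((ts i).realize (Sum.elim default xs) :
            ↥(FirstOrder.Language.Substructure.closure L (KStarSet K U))) : M)) from Iff.rfl]
      rw [φL.map_onRelation]
      have hval : ∀ (T : FirstOrder.Language.Term L (Empty ⊕ Fin n)),
          ((T.realize (Sum.elim default xs) :
            ↥(FirstOrder.Language.Substructure.closure L (KStarSet K U))) : M) =
          (compTermEM φL t T).realize (fun j => ((u j : M))) := by
        intro T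
        rw [realize_compTermEM, ← FirstOrder.Language.realize_term_substructure]
        congr 1
        funext a
        cases a with
        | inl e => exact e.elim
        | inr i => exact (hxs i)
      exact iff_of_eq (congrArg _ (funext fun i => hval (ts i)))
    rw [key u xs hxs, key u' xs' hxs']
    exact hInd m _ u u' hu hu'
  | @imp n φ₁ φ₂ ih₁ ih₂ =>
    intro m t ht u u' hu hu' xs xs' hxs hxs'
    rw [FirstOrder.Language.BoundedFormula.realize_imp,
      FirstOrder.Language.BoundedFormula.realize_imp]
    rw [ih₁ t ht u u' hu hu' xs xs' hxs hxs', ih₂ t ht u u' hu hu' xs xs' hxs hxs']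
  | @all n φ ih =>
    intro m t ht u u' hu hu' xs xs' hxs hxs'
    have key : ∀ (u u' : Fin m → ↥U), StrictMono u → StrictMono u' →
        ∀ (xs xs' : Fin n → ↥(Substructure.closure L (KStarSet K U))),
        (∀ i, (xs i : M) = (t i).realize (fun j => (u j : M))) →
        (∀ i, (xs' i : M) = (t i).realize (fun j => (u' j : M))) →
        (∀ x, φ.Realize default (Fin.snoc xs x)) →
        ∀ x, φ.Realize default (Fin.snoc xs' x) := by
      intro u u' hu hu' xs xs' hxs hxs' H x
      have hx : (x : M) ∈ FirstOrder.Language.Substructure.closure L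
          (KStarSet K (Subtype.val '' (Set.univ : Set ↥U))) := by
        rw [Subtype.coe_image_univ]; exact x.2
      obtain ⟨mw, s, w, hwmono, -, hsgood, hxw⟩ := em_rep φL K U Set.univ hx
      obtain ⟨bigm, c', p, q, hc'mono, hpmono, hqmono, hcp', hcq'⟩ :=
        mergeEM u' w hu' hwmono
      obtain ⟨c, hcmono, hcp⟩ := patternEM p u hpmono hu
      set x₀ : ↥(FirstOrder.Language.Substructure.closure L (KStarSet K U)) :=
        ⟨s.realize (fun i => (c (q i) : M)), hsgood U _ (fun i => (c (q i)).2)⟩ with hx₀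
      set T : Fin (n + 1) → FirstOrder.Language.Term L' (Fin bigm) :=
        Fin.snoc (fun i => (t i).relabel p) (s.relabel q) with hTdef
      have hT : ∀ i, GoodTerm L M K (T i) := by
        intro i
        induction i using Fin.lastCases with
        | last => rw [hTdef, Fin.snoc_last]; exact goodTerm_relabel hsgood q
        | cast i =>
          rw [hTdef, Fin.snoc_castSucc]
          exact goodTerm_relabel (ht i) p
      set X : Fin (n + 1) → ↥(FirstOrder.Language.Substructure.closure L (KStarSet K U)) :=
        Fin.snoc xs x₀ with hXdef
      set X' : Fin (n + 1) → ↥(FirstOrder.Language.Substructure.closure L (KStarSet K U)) :=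
        Fin.snoc xs' x with hX'def
      have h1 : ∀ i, ((X i) : M) =
          (T i).realize (fun j => ((c j : ↥U) : M)) := by
        intro i
        induction i using Fin.lastCases with
        | last =>
          rw [hXdef, hTdef, Fin.snoc_last, Fin.snoc_last,
            FirstOrder.Language.Term.realize_relabel]
          rfl
        | cast i =>
          rw [hXdef, hTdef, Fin.snoc_castSucc, Fin.snoc_castSucc, hxs i,
            FirstOrder.Language.Term.realize_relabel]
          congr 1
          funext j
          simp only [Function.comp_apply, hcp j]
      have h2 : ∀ i, ((X' i) : M) =
          (T i).realize (fun j => ((c' j : ↥U) : M)) := by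
        intro i
        induction i using Fin.lastCases with
        | last =>
          rw [hX'def, hTdef, Fin.snoc_last, Fin.snoc_last,
            FirstOrder.Language.Term.realize_relabel, hxw]
          congr 1
          funext j
          simp only [Function.comp_apply, hcq' j]
        | cast i =>
          rw [hX'def, hTdef, Fin.snoc_castSucc, Fin.snoc_castSucc, hxs' i,
            FirstOrder.Language.Term.realize_relabel]
          congr 1
          funext j
          simp only [Function.comp_apply, hcp' j]
      have := (ih T hT c c' hcmono hc'mono X X' h1 h2).1
      rw [hXdef, hX'def] at this
      have h3 := this (by rw [← hXdef]; exact hXdef ▸ (by rw [hXdef] at *; exact (H x₀ : _)))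
      exact h3
    rw [FirstOrder.Language.BoundedFormula.realize_all,
      FirstOrder.Language.BoundedFormula.realize_all]
    constructor
    · exact fun H => key u u' hu hu' xs xs' hxs hxs' H
    · exact fun H => key u' u hu' hu xs' xs hxs' hxs H

end Indisc
/-- Ehrenfeucht–Mostowski hypotheses: if `V ⊆ U` is dense without endpoints (in the inherited
order), then `Sg^M(K*V)` is an elementary substructure of `Sg^M(K*U)`: it is contained in
`Sg^M(K*U)` and the inclusion map is an `L`-elementary embedding. -/
theorem stmt8 {L L' : FirstOrder.Language} (φL : L →ᴸ L') (M : Type*)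
    [L.Structure M] [L'.Structure M] [φL.IsExpansionOn M]
    (U : Set M) [LinearOrder ↥U] [DenselyOrdered ↥U] [NoMinOrder ↥U] [NoMaxOrder ↥U]
    (hUne : U.Nonempty)
    (hUgen : Substructure.closure L' U = ⊤)
    (hInd : ∀ (n : ℕ) (ψ : L'.Formula (Fin n)) (a b : Fin n → ↥U),
      StrictMono a → StrictMono b →
      (ψ.Realize (fun i => (a i : M)) ↔ ψ.Realize fun i => (b i : M)))
    (K : Set (Σ n, L'.Term (Fin n)))
    (V : Set ↥U) [DenselyOrdered ↥V] [NoMinOrder ↥V] [NoMaxOrder ↥V] (hVne : V.Nonempty) :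
    ∃ h : Substructure.closure L (KStarSet K (Subtype.val '' V)) ≤
        Substructure.closure L (KStarSet K U),
      ∀ (n : ℕ) (ψ : L.Formula (Fin n))
        (x : Fin n → ↥(Substructure.closure L (KStarSet K (Subtype.val '' V)))),
        ψ.Realize x ↔ ψ.Realize fun i => Substructure.inclusion h (x i) := by
  classical
  have : Nonempty ↥U := hUne.to_subtype
  have : Nonempty ↥V := hVne.to_subtype
  have hsub : KStarSet K (Subtype.val '' V) ⊆ KStarSet K U := by
    rintro y (⟨v0, hv0, rfl⟩ | ⟨t, htK, v, rfl⟩)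
    · exact Set.mem_union_left _ v0.2
    · refine Set.mem_union_right _ ⟨t, htK, fun i => ⟨(v i : M), ?_⟩, rfl⟩
      obtain ⟨a, -, hav⟩ := (v i).2
      exact hav ▸ a.2
  have h : Substructure.closure L (KStarSet K (Subtype.val '' V)) ≤
      Substructure.closure L (KStarSet K U) := Substructure.closure_mono hsub
  refine ⟨h, ?_⟩
  have htv : ∀ (n : ℕ) (φ : L.BoundedFormula Empty (n + 1))
      (x : Fin n → ↥(Substructure.closure L (KStarSet K (Subtype.val '' V))))
      (a : ↥(Substructure.closure L (KStarSet K U))),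
      φ.Realize default (Fin.snoc ((Substructure.inclusion h) ∘ x) a) →
      ∃ b, φ.Realize default
        (Fin.snoc ((Substructure.inclusion h) ∘ x) (Substructure.inclusion h b)) := by
    intro n φ x a hreal
    choose mm tt ww hwmono hwV hwgood hwval using fun i => em_rep φL K U V (x i).2
    -- merge the parameter supports into one increasing tuple with entries in V
    set sfin : Finset ↥U := Finset.univ.biUnion (fun i => Finset.image (ww i) Finset.univ)
      with hsfin
    set cV := sfin.orderEmbOfFin rfl with hcV
    have hmem : ∀ i j, ∃ a, cV a = ww i j := by
      intro i j
      have : ww i j ∈ Set.range cV := by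
        rw [hcV, Finset.range_orderEmbOfFin]
        exact Finset.mem_coe.2 (Finset.mem_biUnion.2
          ⟨i, Finset.mem_univ i, Finset.mem_image_of_mem _ (Finset.mem_univ j)⟩)
      exact this
    choose g hg using hmem
    have hcVV : ∀ a, cV a ∈ V := by
      intro a
      have h1 : cV a ∈ sfin := sfin.orderEmbOfFin_mem rfl a
      obtain ⟨i, -, hi⟩ := Finset.mem_biUnion.1 h1
      obtain ⟨j, -, hj⟩ := Finset.mem_image.1 hi
      rw [← hj]; exact hwV i j
    -- the witness support
    have ha : (a : M) ∈ Substructure.closure L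
        (KStarSet K (Subtype.val '' (Set.univ : Set ↥U))) := by
      rw [Subtype.coe_image_univ]; exact a.2
    obtain ⟨m0, s, c₀, hc₀mono, -, hsgood, haw⟩ := em_rep φL K U Set.univ ha
    -- merge parameter support with witness support
    obtain ⟨bigm, c, p, q, hcmono, hpmono, hqmono, hcp, hcq⟩ :=
      mergeEM cV c₀ cV.strictMono hc₀mono
    -- find a matching tuple inside V
    have hvmono : StrictMono (fun j => (⟨cV j, hcVV j⟩ : ↥V)) := by
      intro a b hab
      exact Subtype.mk_lt_mk.2 (cV.strictMono hab)
    obtain ⟨d, hdmono, hdp⟩ := patternEM p (fun j => (⟨cV j, hcVV j⟩ : ↥V)) hpmono hvmono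
    set c' : Fin bigm → ↥U := fun i => ↑(d i) with hc'
    have hc'mono : StrictMono c' := fun a b hab => Subtype.coe_lt_coe.2 (hdmono hab)
    have hc'p : ∀ j, c' (p j) = cV j := by
      intro j
      have hdj : d (p j) = ⟨cV j, hcVV j⟩ := hdp j
      simp only [hc', hdj]
    -- the new witness, inside Sg(K*V)
    have hbmem : Term.realize (fun j => ((c' (q j) : ↥U) : M)) s ∈
        Substructure.closure L (KStarSet K (Subtype.val '' V)) := by
      refine hsgood (Subtype.val '' V) _ fun i => ?_
      exact Set.mem_image_of_mem _ (d (q i)).2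
    set b : ↥(Substructure.closure L (KStarSet K (Subtype.val '' V))) :=
      ⟨Term.realize (fun j => ((c' (q j) : ↥U) : M)) s, hbmem⟩ with hb
    refine ⟨b, ?_⟩
    -- apply indiscernibility between the two supports
    set T : Fin (n + 1) → FirstOrder.Language.Term L' (Fin bigm) :=
      Fin.snoc (fun i => ((tt i).relabel (g i)).relabel p) (s.relabel q) with hT
    have hTgood : ∀ i, GoodTerm L M K (T i) := by
      intro i
      induction i using Fin.lastCases with
      | last => rw [hT, Fin.snoc_last]; exact goodTerm_relabel hsgood q
      | cast i =>
        rw [hT, Fin.snoc_castSucc]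
        exact goodTerm_relabel (goodTerm_relabel (hwgood i) (g i)) p
    set X : Fin (n + 1) → ↥(Substructure.closure L (KStarSet K U)) :=
      Fin.snoc ((Substructure.inclusion h) ∘ x) a with hX
    set X' : Fin (n + 1) → ↥(Substructure.closure L (KStarSet K U)) :=
      Fin.snoc ((Substructure.inclusion h) ∘ x) (Substructure.inclusion h b) with hX'
    have h1 : ∀ i, ((X i) : M) = (T i).realize (fun j => ((c j : ↥U) : M)) := by
      intro i
      induction i using Fin.lastCases with
      | last =>
        rw [hX, hT, Fin.snoc_last, Fin.snoc_last, Term.realize_relabel, haw]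
        congr 1
        funext j
        simp only [Function.comp_apply, hcq j]
      | cast i =>
        rw [hX, hT, Fin.snoc_castSucc, Fin.snoc_castSucc]
        have : ((Substructure.inclusion h ∘ x) i : M) = ((x i : M)) := rfl
        rw [this, hwval i, Term.realize_relabel, Term.realize_relabel]
        congr 1
        funext j
        simp only [Function.comp_apply, hcp (g i j), hg i j]
    have h2 : ∀ i, ((X' i) : M) = (T i).realize (fun j => ((c' j : ↥U) : M)) := by
      intro i
      induction i using Fin.lastCases with
      | last =>
        rw [hX', hT, Fin.snoc_last, Fin.snoc_last, Term.realize_relabel]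
        rfl
      | cast i =>
        rw [hX', hT, Fin.snoc_castSucc, Fin.snoc_castSucc]
        have : ((Substructure.inclusion h ∘ x) i : M) = ((x i : M)) := rfl
        rw [this, hwval i, Term.realize_relabel, Term.realize_relabel]
        congr 1
        funext j
        simp only [Function.comp_apply, hc'p (g i j), hg i j]
    have := (indiscEM φL K U hUne hInd φ T hTgood c c' hcmono hc'mono X X' h1 h2).1
    rw [hX, hX'] at this
    exact this hreal
  intro n ψ x
  exact ((Substructure.inclusion h).isElementary_of_exists htv ψ x).symm
end

section
/- Let T be a theory in a first-order language L and κ a cardinal with κ > max(|L|, ℵ₀). Then T is κ-unique if and only if T is κ-categorical, i.e., T has a model of cardinality κ and any two models of T of cardinality κ are isomorphic. -/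
open FirstOrder Language Cardinal

universe u

/-- `X` generates the `L`-structure `M`: the substructure generated by `X` is all of `M`. -/
def Generates (L : FirstOrder.Language.{u, u}) (M : Type u) [L.Structure M] (X : Set M) : Prop :=
  Substructure.closure L X = ⊤

/-- `M` is `μ`-generated: it is generated by a set of cardinality `μ`. -/
def IsGenerated (L : FirstOrder.Language.{u, u}) (M : Type u) [L.Structure M]
    (μ : Cardinal.{u}) : Prop :=
  ∃ X : Set M, #X = μ ∧ Generates L M X

/-- `M` is strictly `μ`-generated: it is `μ`-generated but not `ν`-generated for any `ν < μ`. -/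
def StrictlyGenerated (L : FirstOrder.Language.{u, u}) (M : Type u) [L.Structure M]
    (μ : Cardinal.{u}) : Prop :=
  IsGenerated L M μ ∧ ∀ ν < μ, ¬ IsGenerated L M ν

/-- A theory `T` is `κ`-unique: it has a strictly `κ`-generated model, and any two strictly
`κ`-generated models of `T` are isomorphic. -/
def KUnique {L : FirstOrder.Language.{u, u}} (T : L.Theory) (κ : Cardinal.{u}) : Prop :=
  (∃ (M : Type u) (_ : L.Structure M), M ⊨ T ∧ StrictlyGenerated L M κ) ∧
  (∀ (M N : Type u) (_ : L.Structure M) (_ : L.Structure N),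
    M ⊨ T → N ⊨ T → StrictlyGenerated L M κ → StrictlyGenerated L N κ →
      Nonempty (M ≃[L] N))

lemma generates_card_le {L : FirstOrder.Language.{u, u}} {M : Type u} [L.Structure M]
    {X : Set M} (h : Generates L M X) : #M ≤ max ℵ₀ (#X + L.card) := by
  have h1 := Substructure.lift_card_closure_le (L := L) (M := M) (s := X)
  rw [h] at h1
  simp only [Cardinal.lift_id] at h1
  have h2 : #M ≤ #((⊤ : L.Substructure M) : Set M) :=
    Cardinal.mk_le_of_surjective (f := fun x => (x : M)) (fun x => ⟨⟨x, trivial⟩, rfl⟩)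
  refine (h2.trans h1).trans ?_
  gcongr
  rw [Language.card, Cardinal.mk_sum]
  simp

lemma strictlyGenerated_iff_card {L : FirstOrder.Language.{u, u}} {M : Type u} [L.Structure M]
    {κ : Cardinal.{u}} (hκ : max L.card ℵ₀ < κ) :
    StrictlyGenerated L M κ ↔ #M = κ := by
  have hL : L.card < κ := lt_of_le_of_lt (le_max_left _ _) hκ
  have hℵ : ℵ₀ < κ := lt_of_le_of_lt (le_max_right _ _) hκ
  constructor
  · rintro ⟨⟨X, hX, hgen⟩, -⟩
    have hle : #M ≤ max ℵ₀ (#X + L.card) := generates_card_le hgen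
    have hge : κ ≤ #M := hX ▸ Cardinal.mk_le_mk_of_subset (Set.subset_univ X) |>.trans (by simp)
    refine le_antisymm (hle.trans ?_) hge
    rw [hX]
    exact max_le hℵ.le (Cardinal.add_le_of_le hℵ.le le_rfl hL.le)
  · intro hM
    constructor
    · refine ⟨Set.univ, by simpa using hM, ?_⟩
      simp [Generates, Substructure.closure_univ]
    · rintro ν hν ⟨X, hX, hgen⟩
      have hle : #M ≤ max ℵ₀ (#X + L.card) := generates_card_le hgen
      rw [hM, hX] at hle
      exact absurd hle (not_le.mpr (max_lt hℵ (Cardinal.add_lt_of_lt hℵ.le hν hL)))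

/-- For `κ > max(|L|, ℵ₀)`, a theory `T` is `κ`-unique if and only if it is `κ`-categorical,
i.e., it has a model of cardinality `κ` and any two models of cardinality `κ` are isomorphic. -/
theorem stmt12 {L : FirstOrder.Language.{u, u}} (T : L.Theory)
    (κ : Cardinal.{u}) (hκ : max L.card ℵ₀ < κ) :
    KUnique T κ ↔
      ((∃ (M : Type u) (_ : L.Structure M), M ⊨ T ∧ #M = κ) ∧
       (∀ (M N : Type u) (_ : L.Structure M) (_ : L.Structure N),
         M ⊨ T → N ⊨ T → #M = κ → #N = κ → Nonempty (M ≃[L] N))) := by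
  rw [KUnique]
  constructor
  · rintro ⟨⟨M, iM, hM, hS⟩, huniq⟩
    refine ⟨⟨M, iM, hM, (strictlyGenerated_iff_card hκ).mp hS⟩, ?_⟩
    intro M N iM iN hMT hNT hMc hNc
    exact huniq M N iM iN hMT hNT ((strictlyGenerated_iff_card hκ).mpr hMc)
      ((strictlyGenerated_iff_card hκ).mpr hNc)
  · rintro ⟨⟨M, iM, hM, hMc⟩, huniq⟩
    refine ⟨⟨M, iM, hM, (strictlyGenerated_iff_card hκ).mpr hMc⟩, ?_⟩
    intro M N iM iN hMT hNT hMs hNs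
    exact huniq M N iM iN hMT hNT ((strictlyGenerated_iff_card hκ).mp hMs)
      ((strictlyGenerated_iff_card hκ).mp hNs)
end
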